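/- arXiv:2306.16800 — 5 statements merged into one kernel-verified Lean document; each statement's English description precedes it below -/
import Mathlib

section
/- Let Π = {ζ ∈ ℂ : Im ζ > 0} be the upper half-plane, ℓ ∈ ℕ, and define f_ℓ(ζ₁,ζ₂) := (ζ₁−ζ₂)^ℓ (ζ₁+i)^{−ℓ−1} (ζ₂+i)^{−ℓ−1}, a holomorphic function on Π×Π. Then P f_ℓ = −ℓ(ℓ+1) f_ℓ on Π×Π. -/
open Complex

noncomputable section

/-- Partial derivative in the first variable. -/
def pd1 (f : ℂ × ℂ → ℂ) (p : ℂ × ℂ) : ℂ := deriv (fun w => f (w, p.2)) p.1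

/-- Partial derivative in the second variable. -/
def pd2 (f : ℂ × ℂ → ℂ) (p : ℂ × ℂ) : ℂ := deriv (fun w => f (p.1, w)) p.2

/-- The differential operator
`(Pf)(ζ₁,ζ₂) = (ζ₁−ζ₂)² ∂²f/∂ζ₁∂ζ₂ − (ζ₁−ζ₂)(∂f/∂ζ₁ − ∂f/∂ζ₂)`. -/
def Pop (f : ℂ × ℂ → ℂ) (p : ℂ × ℂ) : ℂ :=
  (p.1 - p.2) ^ 2 * pd1 (pd2 f) p - (p.1 - p.2) * (pd1 f p - pd2 f p)

/-- `f_ℓ(ζ₁,ζ₂) = (ζ₁−ζ₂)^ℓ (ζ₁+i)^{−ℓ−1} (ζ₂+i)^{−ℓ−1}`. -/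
def fEig (ℓ : ℕ) (p : ℂ × ℂ) : ℂ :=
  (p.1 - p.2) ^ ℓ * (p.1 + Complex.I) ^ (-(ℓ : ℤ) - 1) *
    (p.2 + Complex.I) ^ (-(ℓ : ℤ) - 1)

lemma key (k : ℕ) (m : ℤ) (w z : ℂ) (hz : z + I ≠ 0) :
    HasDerivAt (fun z => (z - w) ^ k * (z + I) ^ m)
      ((k:ℂ) * (z - w) ^ (k-1) * (z + I) ^ m + (z - w) ^ k * ((m:ℂ) * (z + I) ^ (m-1))) z := by
  have h1 : HasDerivAt (fun z : ℂ => (z - w) ^ k) ((k:ℂ) * (z-w)^(k-1)) z := by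
    have := ((hasDerivAt_id z).sub_const w).pow k
    simpa [Pi.pow_def] using this
  have h2 : HasDerivAt (fun z : ℂ => (z + I) ^ m) ((m:ℂ) * (z+I)^(m-1)) z := by
    have := (hasDerivAt_zpow m (z+I) (Or.inl hz)).comp z ((hasDerivAt_id z).add_const I)
    simpa [Function.comp_def] using this
  simpa [Pi.mul_def] using h1.mul h2

lemma key2 (k : ℕ) (m : ℤ) (z w : ℂ) (hw : w + I ≠ 0) :
    HasDerivAt (fun v => (z - v) ^ k * (v + I) ^ m)
      (-((k:ℂ) * (z - w) ^ (k-1)) * (w + I) ^ m + (z - w) ^ k * ((m:ℂ) * (w + I) ^ (m-1))) w := by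
  have h1 : HasDerivAt (fun v : ℂ => (z - v) ^ k) (-((k:ℂ) * (z-w)^(k-1))) w := by
    have := ((hasDerivAt_id w).const_sub z).pow k
    simpa [Pi.pow_def] using this
  have h2 : HasDerivAt (fun v : ℂ => (v + I) ^ m) ((m:ℂ) * (w+I)^(m-1)) w := by
    have := (hasDerivAt_zpow m (w+I) (Or.inl hw)).comp w ((hasDerivAt_id w).add_const I)
    simpa [Function.comp_def] using this
  simpa [Pi.mul_def] using h1.mul h2

lemma pd1_f (ℓ : ℕ) (p : ℂ × ℂ) (h : p.1 + I ≠ 0) :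
    pd1 (fEig ℓ) p =
      ((ℓ:ℂ) * (p.1 - p.2) ^ (ℓ-1) * (p.1+I) ^ (-(ℓ:ℤ)-1)
        + (p.1 - p.2) ^ ℓ * ((-(ℓ:ℂ)-1) * (p.1+I) ^ (-(ℓ:ℤ)-1-1)))
        * (p.2+I) ^ (-(ℓ:ℤ)-1) := by
  have hd := (key ℓ (-(ℓ:ℤ)-1) p.2 p.1 h).mul_const ((p.2+I) ^ (-(ℓ:ℤ)-1))
  have : pd1 (fEig ℓ) p = _ := hd.deriv
  rw [this]; push_cast; ring

lemma pd2_f (ℓ : ℕ) (z w : ℂ) (hw : w + I ≠ 0) :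
    pd2 (fEig ℓ) (z, w) =
      (-(ℓ:ℂ) * (w+I) ^ (-(ℓ:ℤ)-1)) * ((z - w) ^ (ℓ-1) * (z+I) ^ (-(ℓ:ℤ)-1))
        + ((-(ℓ:ℂ)-1) * (w+I) ^ (-(ℓ:ℤ)-1-1)) * ((z - w) ^ ℓ * (z+I) ^ (-(ℓ:ℤ)-1)) := by
  have he : (fun v => fEig ℓ (z, v))
      = fun v => ((z - v) ^ ℓ * (v+I) ^ (-(ℓ:ℤ)-1)) * (z+I) ^ (-(ℓ:ℤ)-1) := by
    funext v; simp only [fEig]; ring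
  have hd := (key2 ℓ (-(ℓ:ℤ)-1) z w hw).mul_const ((z+I) ^ (-(ℓ:ℤ)-1))
  rw [pd2, he, hd.deriv]; push_cast; ring

lemma pd2_f' (ℓ : ℕ) (p : ℂ × ℂ) (hw : p.2 + I ≠ 0) :
    pd2 (fEig ℓ) p =
      (-(ℓ:ℂ) * (p.2+I) ^ (-(ℓ:ℤ)-1)) * ((p.1 - p.2) ^ (ℓ-1) * (p.1+I) ^ (-(ℓ:ℤ)-1))
        + ((-(ℓ:ℂ)-1) * (p.2+I) ^ (-(ℓ:ℤ)-1-1)) * ((p.1 - p.2) ^ ℓ * (p.1+I) ^ (-(ℓ:ℤ)-1)) := by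
  have := pd2_f ℓ p.1 p.2 hw
  simpa using this

lemma pd12 (ℓ : ℕ) (p : ℂ × ℂ) (h1 : p.1 + I ≠ 0) (h2 : p.2 + I ≠ 0) :
    pd1 (pd2 (fEig ℓ)) p =
      (-(ℓ:ℂ) * (p.2+I) ^ (-(ℓ:ℤ)-1)) *
        (((ℓ-1 : ℕ):ℂ) * (p.1 - p.2) ^ (ℓ-1-1) * (p.1+I) ^ (-(ℓ:ℤ)-1)
          + (p.1 - p.2) ^ (ℓ-1) * ((-(ℓ:ℂ)-1) * (p.1+I) ^ (-(ℓ:ℤ)-1-1)))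
      + ((-(ℓ:ℂ)-1) * (p.2+I) ^ (-(ℓ:ℤ)-1-1)) *
        ((ℓ:ℂ) * (p.1 - p.2) ^ (ℓ-1) * (p.1+I) ^ (-(ℓ:ℤ)-1)
          + (p.1 - p.2) ^ ℓ * ((-(ℓ:ℂ)-1) * (p.1+I) ^ (-(ℓ:ℤ)-1-1))) := by
  have he : (fun z => pd2 (fEig ℓ) (z, p.2))
      = fun z => (-(ℓ:ℂ) * (p.2+I) ^ (-(ℓ:ℤ)-1)) * ((z - p.2) ^ (ℓ-1) * (z+I) ^ (-(ℓ:ℤ)-1))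
        + ((-(ℓ:ℂ)-1) * (p.2+I) ^ (-(ℓ:ℤ)-1-1)) * ((z - p.2) ^ ℓ * (z+I) ^ (-(ℓ:ℤ)-1)) := by
    funext z; exact pd2_f ℓ z p.2 h2
  have hd := ((key (ℓ-1) (-(ℓ:ℤ)-1) p.2 p.1 h1).const_mul (-(ℓ:ℂ) * (p.2+I) ^ (-(ℓ:ℤ)-1))).add
    ((key ℓ (-(ℓ:ℤ)-1) p.2 p.1 h1).const_mul ((-(ℓ:ℂ)-1) * (p.2+I) ^ (-(ℓ:ℤ)-1-1)))
  rw [pd1, he]; erw [hd.deriv]; push_cast; ring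

lemma zp1 (X : ℂ) (n : ℕ) : X ^ (-(n:ℤ)-1) = (X ^ (n+1))⁻¹ := by
  rw [show -(n:ℤ)-1 = -((n+1:ℕ):ℤ) by push_cast; ring, zpow_neg, zpow_natCast]

lemma zp2 (X : ℂ) (n : ℕ) : X ^ (-(n:ℤ)-1-1) = (X ^ (n+2))⁻¹ := by
  rw [show -(n:ℤ)-1-1 = -((n+2:ℕ):ℤ) by push_cast; ring, zpow_neg, zpow_natCast]

lemma inv_shift (X : ℂ) (hX : X ≠ 0) (k : ℕ) : (X ^ (k+1))⁻¹ = X * (X ^ (k+2))⁻¹ := by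
  rw [show k+2 = (k+1)+1 from rfl, pow_succ, mul_inv]
  field_simp
  ring

set_option maxHeartbeats 1000000 in
/-- `P f_ℓ = −ℓ(ℓ+1) f_ℓ` on the product `Π × Π` of two copies of the
upper half-plane. -/
theorem statement10 (ℓ : ℕ) :
    ∀ p : ℂ × ℂ, 0 < p.1.im → 0 < p.2.im →
      Pop (fEig ℓ) p = -((ℓ : ℂ) * ((ℓ : ℂ) + 1)) * fEig ℓ p := by
  intro p hp1 hp2
  have hA : p.1 + I ≠ 0 := by
    intro h
    have := congrArg Complex.im h
    simp at this
    linarith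
  have hB : p.2 + I ≠ 0 := by
    intro h
    have := congrArg Complex.im h
    simp at this
    linarith
  rw [Pop, pd1_f ℓ p hA, pd2_f' ℓ p hB, pd12 ℓ p hA hB, fEig]
  simp only [zp1, zp2]
  rw [inv_shift (p.1+I) hA ℓ, inv_shift (p.2+I) hB ℓ]
  generalize ((p.1+I) ^ (ℓ+2))⁻¹ = u
  generalize ((p.2+I) ^ (ℓ+2))⁻¹ = v
  match ℓ with
  | 0 => push_cast; ring
  | 1 => push_cast; ring
  | (n+2) =>
    simp only [Nat.add_sub_cancel, show n+2-1 = n+1 from rfl, show n+1-1 = n from rfl]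
    push_cast
    ring
end
end

section
/- Let Π = {ζ ∈ ℂ : Im ζ > 0}, ℓ ∈ ℕ, and f_ℓ(ζ₁,ζ₂) := (ζ₁−ζ₂)^ℓ (ζ₁+i)^{−ℓ−1} (ζ₂+i)^{−ℓ−1} on Π×Π. Then for all (z,t) ∈ ℂ² with 2|t| < Im z, one has (T f_ℓ)(z,t) = (2ℓ choose ℓ) · t^ℓ · (z+i)^{−2ℓ−2}. -/
open Complex Metric MeasureTheory
open Finset

noncomputable section

/-- The quadratic polynomial `Q(ζ₁,ζ₂) = (ζ₁−z)(ζ₂−z) + t(ζ₁−ζ₂)`. -/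
def Qpoly (z t ζ₁ ζ₂ : ℂ) : ℂ := (ζ₁ - z) * (ζ₂ - z) + t * (ζ₁ - ζ₂)

/-- The double contour integral `(Tf)(z,t)` computed over circles of radius `r`
centered at `z`. -/
def Tgen (f : ℂ × ℂ → ℂ) (z t : ℂ) (r : ℝ) : ℂ :=
  (1 / (2 * Real.pi * Complex.I)) ^ 2 *
    ∮ ζ₁ in C(z, r), ∮ ζ₂ in C(z, r), f (ζ₁, ζ₂) / Qpoly z t ζ₁ ζ₂

lemma polyStep (n M : ℕ) (u b : ℂ) :
    (∑ m ∈ range (M+1), (-1)^m * ((n+1+m).choose m : ℂ) * b^(M-m) * u^m) * (u+b)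
      = b * (∑ m ∈ range (M+1), (-1)^m * ((n+m).choose m : ℂ) * b^(M-m) * u^m)
        + (-1)^M * ((n+1+M).choose M : ℂ) * u^(M+1) := by
  induction M with
  | zero => simp; ring
  | succ M ih =>
      have h1 : ∀ m ∈ range (M+1), (-1:ℂ)^m * ((n+1+m).choose m : ℂ) * b^(M+1-m) * u^m
          = b * ((-1)^m * ((n+1+m).choose m : ℂ) * b^(M-m) * u^m) := by
        intro m hm
        have hm' : m ≤ M := by simpa [Nat.lt_succ_iff] using hm
        rw [show M + 1 - m = (M - m) + 1 from by omega, pow_succ]; ring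
      have h2 : ∀ m ∈ range (M+1), (-1:ℂ)^m * ((n+m).choose m : ℂ) * b^(M+1-m) * u^m
          = b * ((-1)^m * ((n+m).choose m : ℂ) * b^(M-m) * u^m) := by
        intro m hm
        have hm' : m ≤ M := by simpa [Nat.lt_succ_iff] using hm
        rw [show M + 1 - m = (M - m) + 1 from by omega, pow_succ]; ring
      rw [sum_range_succ, sum_congr rfl h1, ← mul_sum,
        sum_range_succ (fun m => (-1:ℂ)^m * ((n+m).choose m : ℂ) * b^(M+1-m) * u^m),
        sum_congr rfl h2, ← mul_sum]
      have pascal : ((n+M+2).choose (M+1) : ℂ)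
          = ((n+M+1).choose M : ℂ) + ((n+M+1).choose (M+1) : ℂ) := by
        exact_mod_cast congrArg (Nat.cast : ℕ → ℂ) (Nat.choose_succ_succ (n+M+1) M)
      simp only [show n+1+(M+1) = n+M+2 from by omega, show n+(M+1) = n+M+1 from by omega,
        show n+1+M = n+M+1 from by omega, show M+1-(M+1) = 0 from by omega, pow_zero, mul_one]
      rw [show n+1+M = n+M+1 from by omega] at ih
      linear_combination b * ih + pascal * ((-1:ℂ)^(M+1) * b * u^(M+1))

lemma polyId (n M : ℕ) (u b : ℂ) :
    (∑ m ∈ range (M+1), (-1)^m * ((n+m).choose m : ℂ) * b^(M-m) * u^m) * (u+b)^(n+1)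
      = b^(n+1+M) + (-1)^M * u^(M+1) *
          ∑ k ∈ range (n+1), ((M+k).choose M : ℂ) * b^(n-k) * (u+b)^k := by
  induction n with
  | zero =>
      have hsum : ∀ m ∈ range (M+1), (-1:ℂ)^m * ((0+m).choose m : ℂ) * b^(M-m) * u^m
          = (-u)^m * b^(M+1-1-m) := by
        intro m hm
        rw [show M+1-1-m = M-m from by omega, Nat.zero_add, Nat.choose_self, neg_pow]
        push_cast; ring
      rw [sum_congr rfl hsum]
      have hgeom := geom_sum₂_mul (-u) b (M+1)
      have hneg : (-u)^(M+1) = (-1:ℂ)^(M+1) * u^(M+1) := by rw [neg_pow]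
      have hC : ((M.choose M : ℕ) : ℂ) = 1 := by simp
      simp only [Nat.zero_add, Finset.range_one, Finset.sum_singleton, Nat.choose_self,
        Nat.cast_one, Nat.add_zero, Nat.sub_self, pow_zero, pow_one, mul_one, one_mul]
      linear_combination -hgeom - hneg
  | succ n ih =>
      have key := polyStep n M u b
      have h3 : ∀ k ∈ range (n+1), ((M+k).choose M : ℂ) * b^(n+1-k) * (u+b)^k
          = b * (((M+k).choose M : ℂ) * b^(n-k) * (u+b)^k) := by
        intro k hk
        have : k ≤ n := by simpa [Nat.lt_succ_iff] using hk
        rw [show n+1-k = (n-k)+1 from by omega, pow_succ]; ring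
      conv_rhs => rw [sum_range_succ, sum_congr rfl h3, ← mul_sum]
      rw [show M+(n+1) = n+1+M from by omega, show n+1-(n+1) = 0 from by omega]
      linear_combination (u+b)^(n+1) * key + b * ih

lemma zpow_nat_diff {x : ℂ} (hx : x ≠ 0) (p q : ℕ) :
    x ^ ((p:ℤ) - (q:ℤ)) = x^p * (x^q)⁻¹ := by
  rw [zpow_sub₀ hx, zpow_natCast, zpow_natCast, div_eq_mul_inv]

lemma taylor_zpow (n M : ℕ) (b v : ℂ) (hb : b ≠ 0) (hv : v ≠ 0) :
    v ^ (-(n:ℤ)-1)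
      = (∑ m ∈ range (M+1), (-1)^m * ((n+m).choose m : ℂ) * b^(-(n:ℤ)-1-(m:ℤ)) * (v-b)^m)
        + (v-b)^(M+1) * (-(-1:ℂ)^M *
            ∑ k ∈ range (n+1), ((M+k).choose M : ℂ) * b^(-(M:ℤ)-1-(k:ℤ)) * v^((k:ℤ)-(n:ℤ)-1)) := by
  have key := polyId n M (v-b) b
  rw [sub_add_cancel] at key
  have hbp : b^(n+1+M) ≠ 0 := pow_ne_zero _ hb
  have hvp : v^(n+1) ≠ 0 := pow_ne_zero _ hv
  have h1 : ∀ m ∈ range (M+1), (-1:ℂ)^m * ((n+m).choose m : ℂ) * b^(-(n:ℤ)-1-(m:ℤ)) * (v-b)^m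
      = ((-1:ℂ)^m * ((n+m).choose m : ℂ) * b^(M-m) * (v-b)^m) * (b^(n+1+M))⁻¹ := by
    intro m hm
    have hm' : m ≤ M := by simpa [Nat.lt_succ_iff] using hm
    have : -(n:ℤ)-1-(m:ℤ) = ((M-m : ℕ):ℤ) - ((n+1+M : ℕ):ℤ) := by push_cast [hm']; ring
    rw [this, zpow_nat_diff hb]; ring
  have h2 : ∀ k ∈ range (n+1), ((M+k).choose M : ℂ) * b^(-(M:ℤ)-1-(k:ℤ)) * v^((k:ℤ)-(n:ℤ)-1)
      = (((M+k).choose M : ℂ) * b^(n-k) * v^k) * ((b^(n+1+M))⁻¹ * (v^(n+1))⁻¹) := by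
    intro k hk
    have hk' : k ≤ n := by simpa [Nat.lt_succ_iff] using hk
    have e1 : -(M:ℤ)-1-(k:ℤ) = ((n-k : ℕ):ℤ) - ((n+1+M : ℕ):ℤ) := by push_cast [hk']; ring
    have e2 : (k:ℤ)-(n:ℤ)-1 = ((k : ℕ):ℤ) - ((n+1 : ℕ):ℤ) := by push_cast; ring
    rw [e1, e2, zpow_nat_diff hb, zpow_nat_diff hv]; ring
  have hL : v ^ (-(n:ℤ)-1) = (v^(n+1))⁻¹ := by
    rw [show -(n:ℤ)-1 = ((0:ℕ):ℤ) - ((n+1:ℕ):ℤ) from by push_cast; ring, zpow_nat_diff hv]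
    simp
  rw [hL, sum_congr rfl h1, ← sum_mul, sum_congr rfl h2, ← sum_mul]
  set Sa := ∑ m ∈ range (M+1), (-1:ℂ)^m * ((n+m).choose m : ℂ) * b^(M-m) * (v-b)^m with hSa
  set Sb := ∑ k ∈ range (n+1), ((M+k).choose M : ℂ) * b^(n-k) * v^k with hSb
  refine mul_right_cancel₀ (mul_ne_zero hbp hvp) ?_
  have lhs_eq : (v^(n+1))⁻¹ * (b^(n+1+M) * v^(n+1)) = b^(n+1+M) := by
    field_simp
  have rhs_eq : (Sa * (b^(n+1+M))⁻¹ + (v-b)^(M+1) * (-(-1:ℂ)^M *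
        (Sb * ((b^(n+1+M))⁻¹ * (v^(n+1))⁻¹)))) * (b^(n+1+M) * v^(n+1))
      = Sa * v^(n+1) - (-1:ℂ)^M * (v-b)^(M+1) * Sb := by
    field_simp
    ring
  rw [lhs_eq, rhs_eq]
  linear_combination -key

open Metric MeasureTheory Complex

lemma circleIntegrable_const_mul {f : ℂ → ℂ} {c : ℂ} {R : ℝ} (hf : CircleIntegrable f c R)
    (a : ℂ) : CircleIntegrable (fun z => a * f z) c R := by
  unfold CircleIntegrable at *
  simpa using hf.const_mul a

lemma circleIntegral_add {f g : ℂ → ℂ} {c : ℂ} {R : ℝ} (hf : CircleIntegrable f c R)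
    (hg : CircleIntegrable g c R) :
    (∮ z in C(c, R), (f z + g z)) = (∮ z in C(c, R), f z) + ∮ z in C(c, R), g z := by
  simp only [circleIntegral, smul_add, intervalIntegral.integral_add hf.out hg.out]

lemma circleIntegral_finset_sum {ι : Type*} (s : Finset ι) (c : ℂ) (R : ℝ) (f : ι → ℂ → ℂ)
    (h : ∀ i ∈ s, CircleIntegrable (f i) c R) :
    (∮ z in C(c, R), ∑ i ∈ s, f i z) = ∑ i ∈ s, ∮ z in C(c, R), f i z := by
  simp only [circleIntegral, Finset.smul_sum]
  exact intervalIntegral.integral_finset_sum (fun i hi => (h i hi).out)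

lemma circleIntegrable_finset_sum {ι : Type*} (s : Finset ι) {c : ℂ} {R : ℝ} {f : ι → ℂ → ℂ}
    (h : ∀ i ∈ s, CircleIntegrable (f i) c R) :
    CircleIntegrable (fun z => ∑ i ∈ s, f i z) c R := by
  unfold CircleIntegrable at *
  have := IntervalIntegrable.sum s (μ := volume) (a := 0) (b := 2 * Real.pi)
    (f := fun i θ => f i (circleMap c R θ)) (fun i hi => h i hi)
  convert this using 1
  case e'_3 => rfl
  ext θ
  simp

lemma diff_zero_integral {ℓ j : ℕ} {z w : ℂ} {r : ℝ} (hr : 0 < r)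
    (hI : ∀ ζ ∈ closedBall z r, ζ + Complex.I ≠ 0) (hj : ℓ < j) :
    (∮ ζ in C(z, r), (ζ - w)^((j:ℤ)-ℓ-1) * (ζ + Complex.I)^(-(ℓ:ℤ)-1)) = 0 := by
  have hd : DifferentiableOn ℂ
      (fun ζ : ℂ => (ζ - w)^((j:ℤ)-ℓ-1) * (ζ + Complex.I)^(-(ℓ:ℤ)-1)) (closedBall z r) := by
    apply DifferentiableOn.mul
    · have e : (j:ℤ)-ℓ-1 = ((j-ℓ-1 : ℕ):ℤ) := by push_cast [Nat.cast_sub hj.le]; omega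
      rw [e]
      apply DifferentiableOn.zpow
      · exact differentiableOn_id.sub_const w
      · right; positivity
    · exact (differentiableOn_id.add_const Complex.I).zpow (Or.inl hI)
  exact Complex.circleIntegral_eq_zero_of_differentiable_on_off_countable hr.le
    Set.countable_empty hd.continuousOn
    (fun x hx => hd.differentiableAt (closedBall_mem_nhds_of_mem hx.1))

lemma keyIntegral (ℓ j : ℕ) (hj : j ≤ ℓ) (z w : ℂ) (r : ℝ) (hr : 0 < r) (hw : w ∈ ball z r)
    (hI : ∀ ζ ∈ closedBall z r, ζ + Complex.I ≠ 0) :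
    (∮ ζ in C(z, r), (ζ - w)^((j:ℤ)-ℓ-1) * (ζ + Complex.I)^(-(ℓ:ℤ)-1))
      = (2 * Real.pi * Complex.I) * ((-1:ℂ)^(ℓ-j) * ((2*ℓ-j).choose (ℓ-j) : ℂ)
          * (w + Complex.I)^((j:ℤ)-2*ℓ-1)) := by
  set M : ℕ := ℓ - j with hM
  have hb : w + Complex.I ≠ 0 := hI w (ball_subset_closedBall hw)
  have hwnotsph : w ∉ sphere z |r| := by
    rw [abs_of_pos hr]
    intro hmem
    rw [mem_sphere] at hmem
    rw [mem_ball] at hw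
    exact absurd hmem (ne_of_lt hw)
  -- the remainder function
  set ρ : ℂ → ℂ := fun ζ => -(-1:ℂ)^M *
      ∑ k ∈ Finset.range (ℓ+1), ((M+k).choose M : ℂ) *
        (w+Complex.I)^(-(M:ℤ)-1-(k:ℤ)) * (ζ+Complex.I)^((k:ℤ)-(ℓ:ℤ)-1) with hρ
  have hρdiff : DifferentiableOn ℂ ρ (closedBall z r) := by
    apply DifferentiableOn.const_mul
    apply DifferentiableOn.fun_sum
    intro k _
    exact ((differentiableOn_id.add_const Complex.I).zpow (Or.inl hI)).const_mul _
  -- the comparison function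
  set G : ℂ → ℂ := fun ζ =>
      (∑ m ∈ Finset.range (M+1), (-1:ℂ)^m * ((ℓ+m).choose m : ℂ)
        * (w+Complex.I)^(-(ℓ:ℤ)-1-(m:ℤ)) * (ζ-w)^((m:ℤ)+(j:ℤ)-ℓ-1)) + ρ ζ with hG
  have hEq : Set.EqOn (fun ζ : ℂ => (ζ - w)^((j:ℤ)-ℓ-1) * (ζ + Complex.I)^(-(ℓ:ℤ)-1)) G
      (sphere z r) := by
    intro ζ hζ
    have hζw : ζ - w ≠ 0 := by
      rw [sub_ne_zero]
      rintro rfl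
      rw [mem_sphere] at hζ
      rw [mem_ball] at hw
      rw [hζ] at hw; exact lt_irrefl _ hw
    have hζI : ζ + Complex.I ≠ 0 := hI ζ (sphere_subset_closedBall hζ)
    have htay := taylor_zpow ℓ M (w+Complex.I) (ζ+Complex.I) hb hζI
    rw [show ζ+Complex.I-(w+Complex.I) = ζ - w from by ring] at htay
    simp only
    rw [htay, mul_add, Finset.mul_sum]
    congr 1
    · apply Finset.sum_congr rfl
      intro m _
      rw [show ((m:ℤ)+(j:ℤ)-ℓ-1) = ((j:ℤ)-ℓ-1) + ((m:ℕ):ℤ) from by push_cast; ring,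
        zpow_add₀ hζw, zpow_natCast]
      ring
    · rw [show ((ζ-w)^(M+1) : ℂ) = (ζ-w)^(((M+1:ℕ):ℤ)) from by rw [zpow_natCast], ← mul_assoc,
        ← zpow_add₀ hζw]
      rw [show ((j:ℤ)-ℓ-1) + ((M+1:ℕ):ℤ) = 0 from by push_cast [Nat.cast_sub hj]; omega]
      simp [hρ]
  rw [circleIntegral.integral_congr hr.le hEq]
  -- integrability of the pieces
  have hint : ∀ m ∈ Finset.range (M+1), CircleIntegrable (fun ζ : ℂ =>
      (-1:ℂ)^m * ((ℓ+m).choose m : ℂ) * (w+Complex.I)^(-(ℓ:ℤ)-1-(m:ℤ))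
        * (ζ-w)^((m:ℤ)+(j:ℤ)-ℓ-1)) z r := by
    intro m _
    have h1 : CircleIntegrable (fun ζ : ℂ => (ζ-w)^((m:ℤ)+(j:ℤ)-ℓ-1)) z r :=
      circleIntegrable_sub_zpow_iff.mpr (Or.inr (Or.inr hwnotsph))
    have := circleIntegrable_const_mul h1
      ((-1:ℂ)^m * ((ℓ+m).choose m : ℂ) * (w+Complex.I)^(-(ℓ:ℤ)-1-(m:ℤ)))
    simpa [mul_assoc] using this
  have hρint : CircleIntegrable ρ z r :=
    (hρdiff.continuousOn.mono sphere_subset_closedBall).circleIntegrable hr.le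
  rw [hG]
  rw [circleIntegral_add (circleIntegrable_finset_sum _ hint) hρint]
  have hρ0 : (∮ ζ in C(z, r), ρ ζ) = 0 :=
    Complex.circleIntegral_eq_zero_of_differentiable_on_off_countable hr.le
      Set.countable_empty hρdiff.continuousOn
      (fun x hx => hρdiff.differentiableAt (closedBall_mem_nhds_of_mem hx.1))
  rw [circleIntegral_finset_sum _ _ _ _ hint, hρ0, add_zero]
  -- evaluate the sum of integrals
  rw [Finset.sum_eq_single_of_mem M (Finset.self_mem_range_succ M) ?side]
  · rw [circleIntegral.integral_const_mul,
      show ((M:ℤ)+(j:ℤ)-ℓ-1) = -1 from by push_cast [hM, Nat.cast_sub hj]; omega,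
      ]
    simp only [zpow_neg_one]
    rw [circleIntegral.integral_sub_inv_of_mem_ball hw]
    rw [show ℓ + M = 2*ℓ - j from by omega,
      show -(ℓ:ℤ)-1-(M:ℤ) = (j:ℤ)-2*ℓ-1 from by push_cast [hM, Nat.cast_sub hj]; omega]
    ring
  case side =>
    intro m _ hm
    rw [circleIntegral.integral_const_mul,
      circleIntegral.integral_sub_zpow_of_ne (by push_cast [hM, Nat.cast_sub hj]; omega) _ _ _,
      mul_zero]

lemma innerStep (ℓ : ℕ) (z t : ℂ) (r : ℝ) (hrpos : 0 < r) (htr : 2 * ‖t‖ < r)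
    (hI : ∀ ζ ∈ closedBall z r, ζ + Complex.I ≠ 0)
    (ζ₁ : ℂ) (hζ₁ : ζ₁ ∈ sphere z r) :
    (∮ ζ₂ in C(z, r), fEig ℓ (ζ₁, ζ₂) / Qpoly z t ζ₁ ζ₂)
      = (2 * Real.pi * Complex.I) * ((ζ₁-z)^(2*ℓ) * (ζ₁+Complex.I)^(-(ℓ:ℤ)-1)
          * ((z+Complex.I)*(ζ₁-z) - t*(ζ₁+Complex.I))^(-(ℓ:ℤ)-1)) := by
  have hζ₁z : ‖ζ₁ - z‖ = r := by rwa [mem_sphere, dist_eq_norm] at hζ₁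
  have hd0 : ζ₁ - z - t ≠ 0 := by
    intro h0
    have ht' : ζ₁ - z = t := by rwa [sub_eq_zero] at h0
    rw [ht'] at hζ₁z
    linarith [norm_nonneg t]
  set d := ζ₁ - z - t with hd_def
  have hdn : r - ‖t‖ ≤ ‖d‖ := by
    have := norm_sub_norm_le (ζ₁ - z) t
    rw [hζ₁z] at this
    exact this
  set w2 := z - t * (ζ₁ - z) / d with hw2
  have hw2ball : w2 ∈ ball z r := by
    rw [mem_ball, dist_eq_norm, hw2]
    have : ‖z - t * (ζ₁ - z) / d - z‖ = ‖t‖ * r / ‖d‖ := by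
      rw [show z - t * (ζ₁ - z) / d - z = -(t * (ζ₁ - z) / d) from by ring, norm_neg,
        norm_div, norm_mul, hζ₁z]
    rw [this, div_lt_iff₀ (by linarith [norm_nonneg t] : (0:ℝ) < ‖d‖)]
    nlinarith [norm_nonneg t]
  have hF : DifferentiableOn ℂ (fun ζ₂ => fEig ℓ (ζ₁, ζ₂) * d⁻¹) (closedBall z r) := by
    unfold fEig
    simp only
    exact ((((differentiableOn_const ζ₁).sub differentiableOn_id).pow ℓ).mul_const
      ((ζ₁ + Complex.I) ^ (-(ℓ:ℤ)-1)) |>.mul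
      ((differentiableOn_id.add_const Complex.I).zpow (Or.inl hI))).mul_const d⁻¹
  have hcong : Set.EqOn (fun ζ₂ => fEig ℓ (ζ₁,ζ₂) / Qpoly z t ζ₁ ζ₂)
      (fun ζ₂ => (ζ₂ - w2)⁻¹ • (fEig ℓ (ζ₁,ζ₂) * d⁻¹)) (sphere z r) := by
    intro ζ₂ _
    have hQ : Qpoly z t ζ₁ ζ₂ = d * (ζ₂ - w2) := by
      rw [hw2, hd_def]
      unfold Qpoly
      field_simp [show ζ₁ - z - t ≠ 0 from hd0]
      ring
    simp only [smul_eq_mul, hQ, div_eq_mul_inv, mul_inv]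
    ring
  rw [circleIntegral.integral_congr hrpos.le hcong,
    hF.circleIntegral_sub_inv_smul hw2ball, smul_eq_mul]
  congr 1
  -- algebraic evaluation at the pole
  have e1 : ζ₁ - w2 = (ζ₁-z)^2 * d⁻¹ := by
    rw [hw2, hd_def]; field_simp [show ζ₁ - z - t ≠ 0 from hd0]; ring
  have e2 : w2 + Complex.I = ((z+Complex.I)*(ζ₁-z) - t*(ζ₁+Complex.I)) * d⁻¹ := by
    rw [hw2, hd_def]; field_simp [show ζ₁ - z - t ≠ 0 from hd0]; ring
  unfold fEig
  simp only
  rw [e1, e2, mul_pow, inv_pow, mul_zpow, ← pow_mul,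
    show ((d⁻¹)^(-(ℓ:ℤ)-1) : ℂ) = d^(ℓ+1) from by
      rw [inv_zpow, ← zpow_neg, show -(-(ℓ:ℤ)-1) = ((ℓ+1:ℕ):ℤ) from by push_cast; ring,
        zpow_natCast],
    show 2*ℓ = ℓ*2 from by ring]
  field_simp
  ring

/-- `(T f_ℓ)(z,t) = (2ℓ choose ℓ) t^ℓ (z+i)^{−2ℓ−2}` for `2|t| < Im z`,
the double contour integral being computed over any circles of radius `r` with
`2|t| < r < Im z` (note `d(z, ∂Π) = Im z` for the upper half-plane `Π`). -/
theorem statement11 (ℓ : ℕ) (z t : ℂ) (h : 2 * ‖t‖ < z.im)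
    (r : ℝ) (hr1 : 2 * ‖t‖ < r) (hr2 : r < z.im) :
    Tgen (fEig ℓ) z t r =
      (Nat.choose (2 * ℓ) ℓ : ℂ) * t ^ ℓ *
        (z + Complex.I) ^ (-(2 * ℓ : ℤ) - 2) := by
  have hrpos : (0:ℝ) < r := lt_of_le_of_lt (by positivity) hr1
  have htr : ‖t‖ < r := by linarith [norm_nonneg t]
  have hZI : r + 1 ≤ ‖z + Complex.I‖ := by
    have h1 : |(z + Complex.I).im| ≤ ‖z + Complex.I‖ := by
      exact Complex.abs_im_le_norm _
    have h2 : (z + Complex.I).im = z.im + 1 := by simp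
    rw [h2] at h1
    calc r + 1 ≤ z.im + 1 := by linarith
      _ ≤ |z.im + 1| := le_abs_self _
      _ ≤ ‖z + Complex.I‖ := h1
  have hzI0 : z + Complex.I ≠ 0 := by
    intro h0; rw [h0] at hZI; simp at hZI; linarith
  set s : ℂ := z + Complex.I - t with hs_def
  clear_value s
  have hsn : ‖z + Complex.I‖ - ‖t‖ ≤ ‖s‖ := by
    rw [hs_def]; exact norm_sub_norm_le _ _
  have hs0 : s ≠ 0 := by
    intro h0
    rw [hs_def, sub_eq_zero] at h0
    rw [h0] at hZI
    linarith
  have hs0' : z + Complex.I - t ≠ 0 := by rw [← hs_def]; exact hs0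
  set w : ℂ := z + t * (z + Complex.I) / s with hw_def
  clear_value w
  have hwz : w - z = t * (z + Complex.I) / s := by rw [hw_def]; ring
  have hwball : w ∈ ball z r := by
    rw [mem_ball, dist_eq_norm, show w - z = t * (z + Complex.I) / s from by rw [hw_def]; ring,
      norm_div, norm_mul, div_lt_iff₀ (by linarith [norm_nonneg t] : (0:ℝ) < ‖s‖)]
    nlinarith [norm_nonneg t, norm_nonneg (z + Complex.I)]
  have hI : ∀ ζ ∈ closedBall z r, ζ + Complex.I ≠ 0 := by
    intro ζ hζ
    have him : |(ζ - z).im| ≤ ‖ζ - z‖ := by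
      exact Complex.abs_im_le_norm _
    rw [mem_closedBall, dist_eq_norm] at hζ
    have : z.im - r ≤ ζ.im := by
      have := abs_le.mp (le_trans him hζ)
      simp only [Complex.sub_im] at this
      linarith [this.1]
    intro h0
    have : (ζ + Complex.I).im = 0 := by rw [h0]; simp
    simp only [Complex.add_im, Complex.I_im] at this
    linarith
  have hbI : w + Complex.I ≠ 0 := hI w (ball_subset_closedBall hwball)
  have hsphw : ∀ ζ ∈ sphere z r, ζ - w ≠ 0 := by
    intro ζ hζ hzero
    rw [mem_sphere] at hζ
    rw [mem_ball] at hwball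
    rw [sub_eq_zero] at hzero
    rw [hzero] at hζ
    rw [hζ] at hwball
    exact lt_irrefl _ hwball
  have hNs : ∀ ζ : ℂ, (z+Complex.I)*(ζ-z) - t*(ζ+Complex.I) = s * (ζ - w) := by
    intro ζ; rw [hw_def, hs_def]; field_simp [hs0']; ring
  -- rewrite outer integrand using the inner step
  have hout : Set.EqOn
      (fun ζ₁ => ∮ ζ₂ in C(z, r), fEig ℓ (ζ₁, ζ₂) / Qpoly z t ζ₁ ζ₂)
      (fun ζ₁ => (2 * Real.pi * Complex.I) *
        ∑ k ∈ Finset.range (2*ℓ+1), ((2*ℓ).choose k : ℂ) * (w-z)^(2*ℓ-k) * s^(-(ℓ:ℤ)-1) *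
          ((ζ₁-w)^((k:ℤ)-ℓ-1) * (ζ₁+Complex.I)^(-(ℓ:ℤ)-1))) (sphere z r) := by
    intro ζ₁ hζ₁
    dsimp only
    rw [innerStep ℓ z t r hrpos hr1 hI ζ₁ hζ₁]
    congr 1
    have hζw : ζ₁ - w ≠ 0 := hsphw ζ₁ hζ₁
    rw [hNs ζ₁, mul_zpow,
      show ζ₁ - z = (ζ₁ - w) + (w - z) from by ring, add_pow, Finset.sum_mul, Finset.sum_mul]
    apply Finset.sum_congr rfl
    intro k _
    rw [show ((k:ℤ)-ℓ-1) = ((k:ℕ):ℤ) + (-(ℓ:ℤ)-1) from by push_cast; ring, zpow_add₀ hζw,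
      zpow_natCast]
    ring
  rw [Tgen, circleIntegral.integral_congr hrpos.le hout, circleIntegral.integral_const_mul]
  -- integrability of summands
  have hintk : ∀ k ∈ Finset.range (2*ℓ+1), CircleIntegrable (fun ζ₁ : ℂ =>
      ((2*ℓ).choose k : ℂ) * (w-z)^(2*ℓ-k) * s^(-(ℓ:ℤ)-1) *
        ((ζ₁-w)^((k:ℤ)-ℓ-1) * (ζ₁+Complex.I)^(-(ℓ:ℤ)-1))) z r := by
    intro k _
    apply ContinuousOn.circleIntegrable hrpos.le
    apply continuousOn_const.mul
    apply ContinuousOn.mul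
    · exact ContinuousOn.zpow₀ (continuousOn_id.sub continuousOn_const)
        _ (fun ζ hζ => Or.inl (hsphw ζ hζ))
    · exact ContinuousOn.zpow₀ (continuousOn_id.add continuousOn_const)
        _ (fun ζ hζ => Or.inl (hI ζ (sphere_subset_closedBall hζ)))
  rw [circleIntegral_finset_sum _ _ _ _ hintk]
  -- evaluate each integral
  have hval : ∀ k ∈ Finset.range (2*ℓ+1),
      (∮ ζ₁ in C(z, r), ((2*ℓ).choose k : ℂ) * (w-z)^(2*ℓ-k) * s^(-(ℓ:ℤ)-1) *
        ((ζ₁-w)^((k:ℤ)-ℓ-1) * (ζ₁+Complex.I)^(-(ℓ:ℤ)-1)))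
      = ((2*ℓ).choose k : ℂ) * (w-z)^(2*ℓ-k) * s^(-(ℓ:ℤ)-1) *
          (∮ ζ₁ in C(z, r), (ζ₁-w)^((k:ℤ)-ℓ-1) * (ζ₁+Complex.I)^(-(ℓ:ℤ)-1)) := by
    intro k _
    exact circleIntegral.integral_const_mul _ _ _ _
  rw [Finset.sum_congr rfl hval]
  -- split the sum
  rw [Finset.range_eq_Ico, ← Finset.sum_Ico_consecutive _ (Nat.zero_le (ℓ+1)) (by omega :
    ℓ+1 ≤ 2*ℓ+1)]
  have hzero : ∀ k ∈ Finset.Ico (ℓ+1) (2*ℓ+1),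
      ((2*ℓ).choose k : ℂ) * (w-z)^(2*ℓ-k) * s^(-(ℓ:ℤ)-1) *
        (∮ ζ₁ in C(z, r), (ζ₁-w)^((k:ℤ)-ℓ-1) * (ζ₁+Complex.I)^(-(ℓ:ℤ)-1)) = 0 := by
    intro k hk
    rw [Finset.mem_Ico] at hk
    rw [diff_zero_integral hrpos hI (by omega), mul_zero]
  rw [Finset.sum_congr rfl hzero, Finset.sum_const_zero, add_zero]
  have hkeyv : ∀ k ∈ Finset.Ico 0 (ℓ+1),
      ((2*ℓ).choose k : ℂ) * (w-z)^(2*ℓ-k) * s^(-(ℓ:ℤ)-1) *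
        (∮ ζ₁ in C(z, r), (ζ₁-w)^((k:ℤ)-ℓ-1) * (ζ₁+Complex.I)^(-(ℓ:ℤ)-1))
      = (2 * Real.pi * Complex.I) * (((2*ℓ).choose k : ℂ) * (w-z)^(2*ℓ-k) * s^(-(ℓ:ℤ)-1) *
          ((-1:ℂ)^(ℓ-k) * ((2*ℓ-k).choose (ℓ-k) : ℂ) * (w + Complex.I)^((k:ℤ)-2*ℓ-1))) := by
    intro k hk
    rw [Finset.mem_Ico] at hk
    rw [keyIntegral ℓ k (by omega) z w r hrpos hwball hI]
    ring
  rw [Finset.sum_congr rfl hkeyv, ← Finset.mul_sum]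
  -- clean up the 2πi factors
  have hpi : (2 * (Real.pi:ℂ) * Complex.I) ≠ 0 := by
    simp [Real.pi_ne_zero, Complex.I_ne_zero, Complex.ofReal_ne_zero]
  rw [show ∀ X : ℂ, (1 / (2 * (Real.pi:ℂ) * Complex.I))^2 *
      (2 * (Real.pi:ℂ) * Complex.I * (2 * (Real.pi:ℂ) * Complex.I * X))
      = (2 * (Real.pi:ℂ) * Complex.I / (2 * (Real.pi:ℂ) * Complex.I))^2 * X from
      fun X => by ring, div_self hpi, one_pow, one_mul]
  -- evaluate the final sum
  have hb_eq : w + Complex.I = (z+Complex.I)^2 / s := by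
    rw [hw_def, hs_def]; field_simp [hs0']; ring
  have hterm : ∀ k ∈ Finset.Ico 0 (ℓ+1),
      ((2*ℓ).choose k : ℂ) * (w-z)^(2*ℓ-k) * s^(-(ℓ:ℤ)-1) *
        ((-1:ℂ)^(ℓ-k) * ((2*ℓ-k).choose (ℓ-k) : ℂ) * (w + Complex.I)^((k:ℤ)-2*ℓ-1))
      = (((2*ℓ).choose ℓ : ℂ) * (w-z)^ℓ * s^(-(ℓ:ℤ)-1) * ((w+Complex.I)^(2*ℓ+1))⁻¹) *
          ((w+Complex.I)^k * (-(w-z))^(ℓ-k) * (ℓ.choose k : ℂ)) := by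
    intro k hk
    rw [Finset.mem_Ico] at hk
    have hkℓ : k ≤ ℓ := by omega
    have hch : ((2*ℓ).choose ℓ : ℂ) * (ℓ.choose k : ℂ)
        = ((2*ℓ).choose k : ℂ) * ((2*ℓ-k).choose (ℓ-k) : ℂ) := by
      exact_mod_cast congrArg (Nat.cast : ℕ → ℂ)
        (Nat.choose_mul (n := 2*ℓ) hkℓ)
    have hp : (w-z)^(2*ℓ-k) = (w-z)^ℓ * (w-z)^(ℓ-k) := by
      rw [← pow_add]
      congr 1
      omega
    rw [hp, show ((k:ℤ)-2*ℓ-1) = ((k:ℕ):ℤ) - ((2*ℓ+1:ℕ):ℤ) from by push_cast; ring,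
      zpow_nat_diff hbI, neg_pow (w-z) (ℓ-k)]
    linear_combination (-((w-z)^ℓ * (w-z)^(ℓ-k) * s^(-(ℓ:ℤ)-1) * (-1:ℂ)^(ℓ-k) *
      (w+Complex.I)^k * ((w+Complex.I)^(2*ℓ+1))⁻¹)) * hch
  rw [Finset.sum_congr rfl hterm, ← Finset.mul_sum, ← Finset.range_eq_Ico, ← add_pow,
    show w + Complex.I + -(w-z) = z+Complex.I from by ring]
  -- final algebra
  rw [show (-(2*ℓ:ℤ)-2) = ((0:ℕ):ℤ) - ((2*ℓ+2:ℕ):ℤ) from by push_cast; ring,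
    zpow_nat_diff hzI0, pow_zero, one_mul,
    show (-(ℓ:ℤ)-1) = ((0:ℕ):ℤ) - ((ℓ+1:ℕ):ℤ) from by push_cast; ring,
    zpow_nat_diff hs0, pow_zero, one_mul, hwz, hb_eq,
    div_pow, mul_pow, div_pow, ← pow_mul]
  field_simp
  ring
end
end

section
/- For every ℓ ∈ ℕ, the complex vector space Sol(ℂ×ℂ)_ℓ = {f entire on ℂ² : Pf = −ℓ(ℓ+1) f} is infinite-dimensional. -/
open Complex

noncomputable section

/-! ### Auxiliary constructions -/

/-- Coefficients of the polynomial eigenfunctions. -/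
def cc (ℓ n : ℕ) : ℕ → ℂ
  | 0 => 1
  | j + 1 => cc ℓ n j * ((ℓ : ℂ) + (j : ℂ) + 1) * ((n - j : ℕ) : ℂ) /
      (((j : ℂ) + 1) * (2 * (ℓ : ℂ) + (j : ℂ) + 2))

lemma cc_rec (ℓ n j : ℕ) :
    cc ℓ n (j + 1) * (((j : ℂ) + 1) * (2 * (ℓ : ℂ) + (j : ℂ) + 2)) =
      cc ℓ n j * ((ℓ : ℂ) + (j : ℂ) + 1) * ((n - j : ℕ) : ℂ) := by
  have h1 : ((j : ℂ) + 1) ≠ 0 := by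
    have : ((j + 1 : ℕ) : ℂ) ≠ 0 := Nat.cast_ne_zero.mpr j.succ_ne_zero
    push_cast at this; exact this
  have h2 : (2 * (ℓ : ℂ) + (j : ℂ) + 2) ≠ 0 := by
    intro h
    have h0 : ((2 * ℓ + j + 2 : ℕ) : ℂ) = 0 := by push_cast; linear_combination h
    exact Nat.cast_ne_zero.mpr (by omega : 2 * ℓ + j + 2 ≠ 0) h0
  show cc ℓ n j * ((ℓ : ℂ) + (j : ℂ) + 1) * ((n - j : ℕ) : ℂ) /
      (((j : ℂ) + 1) * (2 * (ℓ : ℂ) + (j : ℂ) + 2)) * _ = _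
  field_simp
  exact mul_div_cancel_right₀ _ (by rw [mul_comm (ℓ : ℂ) 2]; exact h2)

/-- The polynomial eigenfunctions `∑ c_j (ζ₁-ζ₂)^{ℓ+j} ζ₂^{n-j}`. -/
def sol (ℓ n : ℕ) : ℂ × ℂ → ℂ := fun p =>
  ∑ j ∈ Finset.range (n + 1), cc ℓ n j * ((p.1 - p.2) ^ (ℓ + j) * p.2 ^ (n - j))

lemma sol_diff (ℓ n : ℕ) : Differentiable ℂ (sol ℓ n) := by
  apply Differentiable.fun_sum
  intro j _
  exact (((differentiable_fst.sub differentiable_snd).pow _).mul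
    (differentiable_snd.pow _)).const_mul _

/-- derivative in the first variable of a basic monomial term -/
lemma hd1 (a b : ℕ) (c y x : ℂ) :
    HasDerivAt (fun w => c * ((w - y) ^ a * y ^ b))
      (c * ((a : ℂ) * (x - y) ^ (a - 1) * y ^ b)) x := by
  have h := (((hasDerivAt_id x).sub_const y).pow a).mul_const (y ^ b)
  have h' := h.const_mul c
  simp only [id_eq, Pi.pow_def] at h'
  refine h'.congr_deriv ?_
  ring

/-- derivative in the second variable of a basic monomial term -/
lemma hd2 (a b : ℕ) (c q x : ℂ) :
    HasDerivAt (fun w => c * ((q - w) ^ a * w ^ b))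
      (c * (-((a : ℂ) * (q - x) ^ (a - 1) * x ^ b) +
        ((b : ℕ) : ℂ) * (q - x) ^ a * x ^ (b - 1))) x := by
  have h1 : HasDerivAt (fun w : ℂ => (q - w) ^ a) ((a : ℂ) * (q - x) ^ (a - 1) * (-1)) x := by
    have := ((hasDerivAt_id x).const_sub q).pow a
    simpa [Pi.pow_def] using this
  have h2 : HasDerivAt (fun w : ℂ => w ^ b) ((b : ℂ) * x ^ (b - 1)) x := hasDerivAt_pow b x
  have h := (h1.mul h2).const_mul c
  refine h.congr_deriv ?_
  ring

/-- derivative in the first variable of the terms appearing in `pd2 (sol ℓ n)` -/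
lemma hd3 (a b : ℕ) (c y x : ℂ) :
    HasDerivAt (fun w => c * (-((a : ℂ) * (w - y) ^ (a - 1) * y ^ b) +
        ((b : ℕ) : ℂ) * (w - y) ^ a * y ^ (b - 1)))
      (c * (-((a : ℂ) * ((a - 1 : ℕ) : ℂ) * (x - y) ^ (a - 1 - 1) * y ^ b) +
        ((b : ℕ) : ℂ) * ((a : ℕ) : ℂ) * (x - y) ^ (a - 1) * y ^ (b - 1))) x := by
  have h1 := (((hasDerivAt_id x).sub_const y).pow (a - 1)).mul_const (y ^ b)
  have h2 := (((hasDerivAt_id x).sub_const y).pow a).mul_const (y ^ (b - 1))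
  have h := ((h1.const_mul (-(a : ℂ))).add (h2.const_mul ((b : ℕ) : ℂ))).const_mul c
  simp only [id_eq, Pi.pow_def] at h
  have hfe : (fun w => c * (-((a : ℂ) * (w - y) ^ (a - 1) * y ^ b) +
      ((b : ℕ) : ℂ) * (w - y) ^ a * y ^ (b - 1))) =
      (fun w => c * (-(a : ℂ) * ((w - y) ^ (a - 1) * y ^ b) +
        ((b : ℕ) : ℂ) * ((w - y) ^ a * y ^ (b - 1)))) := by
    funext w; ring
  rw [hfe]
  refine h.congr_deriv ?_
  ring

lemma pd1_sol (ℓ n : ℕ) (p : ℂ × ℂ) :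
    pd1 (sol ℓ n) p = ∑ j ∈ Finset.range (n + 1),
      cc ℓ n j * (((ℓ + j : ℕ) : ℂ) * (p.1 - p.2) ^ (ℓ + j - 1) * p.2 ^ (n - j)) := by
  have h : HasDerivAt (fun w => sol ℓ n (w, p.2))
      (∑ j ∈ Finset.range (n + 1),
        cc ℓ n j * (((ℓ + j : ℕ) : ℂ) * (p.1 - p.2) ^ (ℓ + j - 1) * p.2 ^ (n - j))) p.1 := by
    apply HasDerivAt.fun_sum
    intro j _
    exact hd1 (ℓ + j) (n - j) (cc ℓ n j) p.2 p.1
  exact h.deriv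

lemma pd2_sol (ℓ n : ℕ) (p : ℂ × ℂ) :
    pd2 (sol ℓ n) p = ∑ j ∈ Finset.range (n + 1),
      cc ℓ n j * (-(((ℓ + j : ℕ) : ℂ) * (p.1 - p.2) ^ (ℓ + j - 1) * p.2 ^ (n - j)) +
        ((n - j : ℕ) : ℂ) * (p.1 - p.2) ^ (ℓ + j) * p.2 ^ (n - j - 1)) := by
  have h : HasDerivAt (fun w => sol ℓ n (p.1, w))
      (∑ j ∈ Finset.range (n + 1),
        cc ℓ n j * (-(((ℓ + j : ℕ) : ℂ) * (p.1 - p.2) ^ (ℓ + j - 1) * p.2 ^ (n - j)) +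
          ((n - j : ℕ) : ℂ) * (p.1 - p.2) ^ (ℓ + j) * p.2 ^ (n - j - 1))) p.2 := by
    apply HasDerivAt.fun_sum
    intro j _
    exact hd2 (ℓ + j) (n - j) (cc ℓ n j) p.1 p.2
  exact h.deriv

lemma pd1_pd2_sol (ℓ n : ℕ) (p : ℂ × ℂ) :
    pd1 (pd2 (sol ℓ n)) p = ∑ j ∈ Finset.range (n + 1),
      cc ℓ n j * (-(((ℓ + j : ℕ) : ℂ) * ((ℓ + j - 1 : ℕ) : ℂ) *
          (p.1 - p.2) ^ (ℓ + j - 1 - 1) * p.2 ^ (n - j)) +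
        ((n - j : ℕ) : ℂ) * ((ℓ + j : ℕ) : ℂ) * (p.1 - p.2) ^ (ℓ + j - 1) * p.2 ^ (n - j - 1)) := by
  have hfun : pd2 (sol ℓ n) = fun q : ℂ × ℂ => ∑ j ∈ Finset.range (n + 1),
      cc ℓ n j * (-(((ℓ + j : ℕ) : ℂ) * (q.1 - q.2) ^ (ℓ + j - 1) * q.2 ^ (n - j)) +
        ((n - j : ℕ) : ℂ) * (q.1 - q.2) ^ (ℓ + j) * q.2 ^ (n - j - 1)) :=
    funext fun q => pd2_sol ℓ n q
  rw [hfun]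
  unfold pd1
  have h : HasDerivAt (fun w : ℂ => ∑ j ∈ Finset.range (n + 1),
      cc ℓ n j * (-(((ℓ + j : ℕ) : ℂ) * (w - p.2) ^ (ℓ + j - 1) * p.2 ^ (n - j)) +
        ((n - j : ℕ) : ℂ) * (w - p.2) ^ (ℓ + j) * p.2 ^ (n - j - 1)))
      (∑ j ∈ Finset.range (n + 1),
        cc ℓ n j * (-(((ℓ + j : ℕ) : ℂ) * ((ℓ + j - 1 : ℕ) : ℂ) *
            (p.1 - p.2) ^ (ℓ + j - 1 - 1) * p.2 ^ (n - j)) +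
          ((n - j : ℕ) : ℂ) * ((ℓ + j : ℕ) : ℂ) * (p.1 - p.2) ^ (ℓ + j - 1) *
            p.2 ^ (n - j - 1))) p.1 := by
    apply HasDerivAt.fun_sum
    intro j _
    exact hd3 (ℓ + j) (n - j) (cc ℓ n j) p.2 p.1
  exact h.deriv

/-- Action of the operator on a single monomial (pointwise algebra). -/
lemma key_s15 (a b : ℕ) (U S : ℂ) :
    U ^ 2 * (-((a : ℂ) * ((a - 1 : ℕ) : ℂ) * U ^ (a - 1 - 1) * S ^ b) +
        ((b : ℕ) : ℂ) * ((a : ℕ) : ℂ) * U ^ (a - 1) * S ^ (b - 1)) -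
      U * (((a : ℂ) * U ^ (a - 1) * S ^ b) -
        (-((a : ℂ) * U ^ (a - 1) * S ^ b) + ((b : ℕ) : ℂ) * U ^ a * S ^ (b - 1))) =
    ((a : ℂ) + 1) * ((b : ℕ) : ℂ) * U ^ (a + 1) * S ^ (b - 1) -
      (a : ℂ) * ((a : ℂ) + 1) * (U ^ a * S ^ b) := by
  match a with
  | 0 => simp; ring
  | 1 => norm_num; ring
  | (a + 2) =>
    simp only [show a + 2 - 1 = a + 1 from rfl, show a + 1 - 1 = a from rfl]
    push_cast
    ring

lemma tele (ℓ n : ℕ) (U S : ℂ) :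
    (∑ j ∈ Finset.range (n + 1), cc ℓ n j *
        ((((ℓ + j : ℕ) : ℂ) + 1) * ((n - j : ℕ) : ℂ) * U ^ (ℓ + j + 1) * S ^ (n - j - 1))) =
    ∑ j ∈ Finset.range (n + 1), cc ℓ n j *
        ((((ℓ + j : ℕ) : ℂ) * (((ℓ + j : ℕ) : ℂ) + 1) - (ℓ : ℂ) * ((ℓ : ℂ) + 1)) *
          (U ^ (ℓ + j) * S ^ (n - j))) := by
  rw [Finset.sum_range_succ, Finset.sum_range_succ']
  have hlast : cc ℓ n n *
      ((((ℓ + n : ℕ) : ℂ) + 1) * ((n - n : ℕ) : ℂ) * U ^ (ℓ + n + 1) * S ^ (n - n - 1)) = 0 := by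
    simp
  have hfirst : cc ℓ n 0 *
      ((((ℓ + 0 : ℕ) : ℂ) * (((ℓ + 0 : ℕ) : ℂ) + 1) - (ℓ : ℂ) * ((ℓ : ℂ) + 1)) *
        (U ^ (ℓ + 0) * S ^ (n - 0))) = 0 := by
    simp
  rw [hlast, hfirst, add_zero, add_zero]
  apply Finset.sum_congr rfl
  intro j _
  have hrec := cc_rec ℓ n j
  have hcoef : ((((ℓ + (j + 1) : ℕ) : ℂ)) * (((ℓ + (j + 1) : ℕ) : ℂ) + 1) -
      (ℓ : ℂ) * ((ℓ : ℂ) + 1)) = (((j : ℂ) + 1) * (2 * (ℓ : ℂ) + (j : ℂ) + 2)) := by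
    push_cast
    ring
  have hexp1 : ℓ + (j + 1) = ℓ + j + 1 := by omega
  have hexp2 : n - (j + 1) = n - j - 1 := by omega
  rw [hcoef, hexp1, hexp2]
  have hcast : (((ℓ + j : ℕ) : ℂ) + 1) = ((ℓ : ℂ) + (j : ℂ) + 1) := by push_cast; ring
  rw [hcast]
  calc cc ℓ n j * (((ℓ : ℂ) + (j : ℂ) + 1) * ((n - j : ℕ) : ℂ) * U ^ (ℓ + j + 1) * S ^ (n - j - 1))
      = (cc ℓ n j * ((ℓ : ℂ) + (j : ℂ) + 1) * ((n - j : ℕ) : ℂ)) *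
          (U ^ (ℓ + j + 1) * S ^ (n - j - 1)) := by ring
    _ = (cc ℓ n (j + 1) * (((j : ℂ) + 1) * (2 * (ℓ : ℂ) + (j : ℂ) + 2))) *
          (U ^ (ℓ + j + 1) * S ^ (n - j - 1)) := by rw [hrec]
    _ = cc ℓ n (j + 1) * ((((j : ℂ) + 1) * (2 * (ℓ : ℂ) + (j : ℂ) + 2)) *
          (U ^ (ℓ + j + 1) * S ^ (n - j - 1))) := by ring

lemma sol_eigen (ℓ n : ℕ) (p : ℂ × ℂ) :
    Pop (sol ℓ n) p = -((ℓ : ℂ) * ((ℓ : ℂ) + 1)) * sol ℓ n p := by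
  unfold Pop
  rw [pd1_sol, pd2_sol, pd1_pd2_sol]
  unfold sol
  rw [Finset.mul_sum, Finset.mul_sum, ← Finset.sum_sub_distrib, Finset.mul_sum,
    ← Finset.sum_sub_distrib]
  have hstep : ∀ j ∈ Finset.range (n + 1),
      (p.1 - p.2) ^ 2 * (cc ℓ n j * (-(((ℓ + j : ℕ) : ℂ) * ((ℓ + j - 1 : ℕ) : ℂ) *
          (p.1 - p.2) ^ (ℓ + j - 1 - 1) * p.2 ^ (n - j)) +
        ((n - j : ℕ) : ℂ) * ((ℓ + j : ℕ) : ℂ) * (p.1 - p.2) ^ (ℓ + j - 1) * p.2 ^ (n - j - 1))) -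
      (p.1 - p.2) * (cc ℓ n j * (((ℓ + j : ℕ) : ℂ) * (p.1 - p.2) ^ (ℓ + j - 1) * p.2 ^ (n - j)) -
        cc ℓ n j * (-(((ℓ + j : ℕ) : ℂ) * (p.1 - p.2) ^ (ℓ + j - 1) * p.2 ^ (n - j)) +
          ((n - j : ℕ) : ℂ) * (p.1 - p.2) ^ (ℓ + j) * p.2 ^ (n - j - 1))) =
      cc ℓ n j * ((((ℓ + j : ℕ) : ℂ) + 1) * ((n - j : ℕ) : ℂ) *
          (p.1 - p.2) ^ (ℓ + j + 1) * p.2 ^ (n - j - 1)) -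
      cc ℓ n j * ((((ℓ + j : ℕ) : ℂ) * (((ℓ + j : ℕ) : ℂ) + 1)) *
          ((p.1 - p.2) ^ (ℓ + j) * p.2 ^ (n - j))) := by
    intro j _
    have h := key_s15 (ℓ + j) (n - j) (p.1 - p.2) p.2
    calc _ = cc ℓ n j * ((p.1 - p.2) ^ 2 * (-(((ℓ + j : ℕ) : ℂ) * ((ℓ + j - 1 : ℕ) : ℂ) *
            (p.1 - p.2) ^ (ℓ + j - 1 - 1) * p.2 ^ (n - j)) +
          ((n - j : ℕ) : ℂ) * ((ℓ + j : ℕ) : ℂ) * (p.1 - p.2) ^ (ℓ + j - 1) * p.2 ^ (n - j - 1)) -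
        (p.1 - p.2) * ((((ℓ + j : ℕ) : ℂ) * (p.1 - p.2) ^ (ℓ + j - 1) * p.2 ^ (n - j)) -
          (-(((ℓ + j : ℕ) : ℂ) * (p.1 - p.2) ^ (ℓ + j - 1) * p.2 ^ (n - j)) +
            ((n - j : ℕ) : ℂ) * (p.1 - p.2) ^ (ℓ + j) * p.2 ^ (n - j - 1)))) := by
          push_cast
          ring
      _ = _ := by rw [h]; push_cast; ring
  rw [Finset.sum_congr rfl hstep, Finset.sum_sub_distrib, tele ℓ n (p.1 - p.2) p.2,
    ← Finset.sum_sub_distrib]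
  apply Finset.sum_congr rfl
  intro j _
  ring

/-- The polynomial obtained by restricting `sol ℓ n` to the line `z ↦ (z+1, z)`. -/
def pol (ℓ n : ℕ) : Polynomial ℂ :=
  ∑ j ∈ Finset.range (n + 1), Polynomial.C (cc ℓ n j) * Polynomial.X ^ (n - j)

lemma pol_coeff_top (ℓ n : ℕ) : (pol ℓ n).coeff n = 1 := by
  unfold pol
  rw [Polynomial.finset_sum_coeff]
  rw [Finset.sum_eq_single 0]
  · simp [cc]
  · intro j hj hj0
    rw [Polynomial.coeff_C_mul, Polynomial.coeff_X_pow, if_neg (by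
      simp only [Finset.mem_range] at hj; omega), mul_zero]
  · intro h
    exact absurd (Finset.mem_range.mpr (Nat.succ_pos n)) h

lemma pol_natDegree_le (ℓ n : ℕ) : (pol ℓ n).natDegree ≤ n := by
  unfold pol
  refine le_trans (Polynomial.natDegree_sum_le _ _) ?_
  rw [Finset.fold_max_le]
  refine ⟨Nat.zero_le n, fun j _ => ?_⟩
  exact le_trans (Polynomial.natDegree_C_mul_X_pow_le _ _) (Nat.sub_le n j)

lemma li_pol (ℓ : ℕ) : LinearIndependent ℂ (pol ℓ) := by
  rw [linearIndependent_iff']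
  have main : ∀ s : Finset ℕ, ∀ g : ℕ → ℂ,
      (∑ i ∈ s, g i • pol ℓ i) = 0 → ∀ i ∈ s, g i = 0 := by
    intro s
    induction s using Finset.induction_on_max with
    | empty => simp
    | insert a s ha ih =>
      intro g hsum i hi
      have hanotmem : a ∉ s := fun h => lt_irrefl a (ha a h)
      have hga : g a = 0 := by
        have h := congrArg (fun q => Polynomial.coeff q a) hsum
        simp only [Finset.sum_insert hanotmem, Polynomial.coeff_add,
          Polynomial.finset_sum_coeff, Polynomial.coeff_smul, Polynomial.coeff_zero,
          smul_eq_mul] at h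
        have hz : ∀ i ∈ s, g i * (pol ℓ i).coeff a = 0 := by
          intro i his
          rw [Polynomial.coeff_eq_zero_of_natDegree_lt
            (lt_of_le_of_lt (pol_natDegree_le ℓ i) (ha i his)), mul_zero]
        rw [Finset.sum_eq_zero hz, add_zero, pol_coeff_top, mul_one] at h
        exact h
      have hsum' : (∑ i ∈ s, g i • pol ℓ i) = 0 := by
        rw [Finset.sum_insert hanotmem, hga, zero_smul, zero_add] at hsum
        exact hsum
      rcases Finset.mem_insert.mp hi with rfl | his
      · exact hga
      · exact ih g hsum' i his
  intro s g hsum i hi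
  exact main s g hsum i hi

/-- Evaluation of polynomials as a linear map into functions. -/
def evalMap : Polynomial ℂ →ₗ[ℂ] (ℂ → ℂ) where
  toFun q := fun z => q.eval z
  map_add' := by intro p q; funext z; simp
  map_smul' := by intro c q; funext z; simp

lemma evalMap_ker : LinearMap.ker evalMap = ⊥ := by
  rw [LinearMap.ker_eq_bot']
  intro q hq
  apply Polynomial.funext
  intro r
  have : (fun z => q.eval z) = (0 : ℂ → ℂ) := hq
  simpa using congrFun this r

/-- for every `ℓ ∈ ℕ`, the space
`Sol(ℂ×ℂ)_ℓ = {f entire on ℂ² : Pf = −ℓ(ℓ+1)f}` is infinite-dimensional: it contains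
a linearly independent family indexed by `ℕ`. -/
theorem statement15 (ℓ : ℕ) :
    ∃ f : ℕ → (ℂ × ℂ → ℂ),
      (∀ n, Differentiable ℂ (f n) ∧
        ∀ p : ℂ × ℂ, Pop (f n) p = -((ℓ : ℂ) * ((ℓ : ℂ) + 1)) * f n p) ∧
      LinearIndependent ℂ f := by
  refine ⟨sol ℓ, fun n => ⟨sol_diff ℓ n, sol_eigen ℓ n⟩, ?_⟩
  have hli : LinearIndependent ℂ (⇑evalMap ∘ pol ℓ) :=
    (li_pol ℓ).map' evalMap evalMap_ker
  apply LinearIndependent.of_comp (LinearMap.funLeft ℂ ℂ (fun z : ℂ => (z + 1, z)))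
  have heq : (⇑(LinearMap.funLeft ℂ ℂ (fun z : ℂ => (z + 1, z))) ∘ sol ℓ) =
      (⇑evalMap ∘ pol ℓ) := by
    funext n z
    simp only [Function.comp_apply, LinearMap.funLeft_apply, evalMap, LinearMap.coe_mk,
      AddHom.coe_mk, sol, pol, Polynomial.eval_finset_sum]
    apply Finset.sum_congr rfl
    intro j _
    simp
  rw [heq]
  exact hli
end
end

section
/- Let F be a twice continuously differentiable complex-valued function on (0,∞)×(−1,1), and define G on {(x,y) ∈ ℝ² : x > 0, y > 0} by G(x,y) := F(x+y, (y−x)/(x+y)) (i.e. G(x,y) = F(s,v) under the change of variables x = s(1−v)/2, y = s(1+v)/2). Then for all s > 0 and v ∈ (−1,1), with (x,y) = (s(1−v)/2, s(1+v)/2), one has ((∂_x − ∂_y)² (x y G))(x,y) + ((∂_x − ∂_y)((x−y) G))(x,y) = (1−v²) ∂²F/∂v²(s,v) − 2v ∂F/∂v(s,v); that is, under this change of variables the operator (∂_x−∂_y)² ∘ (multiplication by xy) + (∂_x−∂_y) ∘ (multiplication by x−y) becomes the Legendre operator (1−v²)∂_v² − 2v∂_v. -/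
open Complex

noncomputable section

/-- Partial derivative in the first (real) variable. -/
def pdx (G : ℝ × ℝ → ℂ) (p : ℝ × ℝ) : ℂ := deriv (fun x => G (x, p.2)) p.1

/-- Partial derivative in the second (real) variable. -/
def pdy (G : ℝ × ℝ → ℂ) (p : ℝ × ℝ) : ℂ := deriv (fun y => G (p.1, y)) p.2

/-- The operator `∂_x − ∂_y`. -/
def Dxy (G : ℝ × ℝ → ℂ) (p : ℝ × ℝ) : ℂ := pdx G p - pdy G p

/-- The change of variables map. -/
def phi (p : ℝ × ℝ) : ℝ × ℝ := (p.1 + p.2, (p.2 - p.1) / (p.1 + p.2))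

lemma phi_x {x y : ℝ} (h : x + y ≠ 0) :
    HasDerivAt (fun t => phi (t, y)) (1, -2 * y / (x + y) ^ 2) x := by
  have h1 : HasDerivAt (fun t : ℝ => t + y) 1 x := (hasDerivAt_id x).add_const y
  have h2 : HasDerivAt (fun t : ℝ => (y - t) / (t + y)) (-2 * y / (x + y) ^ 2) x := by
    have hn : HasDerivAt (fun t : ℝ => y - t) (-1) x := by
      simpa using (hasDerivAt_id x).const_sub y
    have hd := hn.div h1 h
    exact hd.congr_deriv (by ring)
  exact h1.prodMk h2

lemma phi_y {x y : ℝ} (h : x + y ≠ 0) :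
    HasDerivAt (fun t => phi (x, t)) (1, 2 * x / (x + y) ^ 2) y := by
  have h1 : HasDerivAt (fun t : ℝ => x + t) 1 y := by
    simpa using (hasDerivAt_id y).const_add x
  have h2 : HasDerivAt (fun t : ℝ => (t - x) / (x + t)) (2 * x / (x + y) ^ 2) y := by
    have hn : HasDerivAt (fun t : ℝ => t - x) 1 y := (hasDerivAt_id y).sub_const x
    have hd := hn.div h1 h
    exact hd.congr_deriv (by ring)
  exact h1.prodMk h2

lemma slicemul (Φ : ℝ × ℝ → ℂ) {c : ℝ → ℝ × ℝ} {c' : ℝ × ℝ} {r : ℝ → ℝ} {r' t : ℝ}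
    (hc : HasDerivAt c c' t) (hr : HasDerivAt r r' t)
    (hΦ : DifferentiableAt ℝ Φ (c t)) :
    HasDerivAt (fun u => ((r u : ℝ) : ℂ) * Φ (c u))
      (((r' : ℝ) : ℂ) * Φ (c t) + ((r t : ℝ) : ℂ) * fderiv ℝ Φ (c t) c') t := by
  have h1 : HasDerivAt (fun u => ((r u : ℝ) : ℂ)) ((r' : ℝ) : ℂ) t := hr.ofReal_comp
  have h2 : HasDerivAt (fun u => Φ (c u)) (fderiv ℝ Φ (c t) c') t :=
    hΦ.hasFDerivAt.comp_hasDerivAt t hc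
  exact h1.mul h2

lemma Dxy_congr {H K : ℝ × ℝ → ℂ} {V : Set (ℝ × ℝ)} (hV : IsOpen V) {p : ℝ × ℝ}
    (hp : p ∈ V) (h : ∀ q ∈ V, H q = K q) : Dxy H p = Dxy K p := by
  have hx : (fun x => H (x, p.2)) =ᶠ[nhds p.1] fun x => K (x, p.2) := by
    have hc : ContinuousAt (fun x : ℝ => (x, p.2)) p.1 := by fun_prop
    filter_upwards [hc.eventually_mem (hV.mem_nhds hp)] with a ha
    exact h _ ha
  have hy : (fun y => H (p.1, y)) =ᶠ[nhds p.2] fun y => K (p.1, y) := by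
    have hc : ContinuousAt (fun y : ℝ => (p.1, y)) p.2 := by fun_prop
    filter_upwards [hc.eventually_mem (hV.mem_nhds hp)] with a ha
    exact h _ ha
  simp only [Dxy, pdx, pdy]
  rw [hx.deriv_eq, hy.deriv_eq]

lemma master (Φ : ℝ × ℝ → ℂ) (r : ℝ × ℝ → ℝ) (a b rx ry : ℝ)
    (hab : 0 < a + b)
    (hrx : HasDerivAt (fun t => r (t, b)) rx a)
    (hry : HasDerivAt (fun t => r (a, t)) ry b)
    (hΦ : DifferentiableAt ℝ Φ (phi (a, b))) :
    Dxy (fun q => ((r q : ℝ) : ℂ) * Φ (phi q)) (a, b)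
      = ((rx - ry : ℝ) : ℂ) * Φ (phi (a, b))
        + ((r (a, b) * (-2 / (a + b)) : ℝ) : ℂ) * fderiv ℝ Φ (phi (a, b)) (0, 1) := by
  have habne : a + b ≠ 0 := ne_of_gt hab
  have hX : HasDerivAt (fun u => ((r (u, b) : ℝ) : ℂ) * Φ (phi (u, b)))
      (((rx : ℝ) : ℂ) * Φ (phi (a, b))
        + ((r (a, b) : ℝ) : ℂ) * fderiv ℝ Φ (phi (a, b)) (1, -2 * b / (a + b) ^ 2)) a :=
    slicemul Φ (phi_x habne) hrx hΦ
  have hY : HasDerivAt (fun u => ((r (a, u) : ℝ) : ℂ) * Φ (phi (a, u)))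
      (((ry : ℝ) : ℂ) * Φ (phi (a, b))
        + ((r (a, b) : ℝ) : ℂ) * fderiv ℝ Φ (phi (a, b)) (1, 2 * a / (a + b) ^ 2)) b :=
    slicemul Φ (phi_y habne) hry hΦ
  have key : fderiv ℝ Φ (phi (a, b)) (1, -2 * b / (a + b) ^ 2)
        - fderiv ℝ Φ (phi (a, b)) (1, 2 * a / (a + b) ^ 2)
      = ((-2 / (a + b) : ℝ) : ℂ) * fderiv ℝ Φ (phi (a, b)) (0, 1) := by
    rw [← ContinuousLinearMap.map_sub]
    have hvec : ((1 : ℝ), -2 * b / (a + b) ^ 2) - ((1 : ℝ), 2 * a / (a + b) ^ 2)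
        = (-2 / (a + b)) • ((0 : ℝ), (1 : ℝ)) := by
      rw [Prod.mk_sub_mk, Prod.smul_mk, Prod.mk.injEq]
      constructor
      · simp
      · rw [smul_eq_mul, mul_one]
        field_simp
        ring
    rw [hvec, ContinuousLinearMap.map_smul, Complex.real_smul]
  simp only [Dxy, pdx, pdy]
  rw [hX.deriv, hY.deriv]
  push_cast at key ⊢
  linear_combination ((r (a, b) : ℝ) : ℂ) * key

lemma master2 (Φ₁ Φ₂ : ℝ × ℝ → ℂ) (r₁ r₂ : ℝ × ℝ → ℝ) (a b rx₁ ry₁ rx₂ ry₂ : ℝ)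
    (hab : 0 < a + b)
    (hrx₁ : HasDerivAt (fun t => r₁ (t, b)) rx₁ a)
    (hry₁ : HasDerivAt (fun t => r₁ (a, t)) ry₁ b)
    (hrx₂ : HasDerivAt (fun t => r₂ (t, b)) rx₂ a)
    (hry₂ : HasDerivAt (fun t => r₂ (a, t)) ry₂ b)
    (hΦ₁ : DifferentiableAt ℝ Φ₁ (phi (a, b)))
    (hΦ₂ : DifferentiableAt ℝ Φ₂ (phi (a, b))) :
    Dxy (fun q => ((r₁ q : ℝ) : ℂ) * Φ₁ (phi q) + ((r₂ q : ℝ) : ℂ) * Φ₂ (phi q)) (a, b)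
      = ((rx₁ - ry₁ : ℝ) : ℂ) * Φ₁ (phi (a, b))
        + ((r₁ (a, b) * (-2 / (a + b)) : ℝ) : ℂ) * fderiv ℝ Φ₁ (phi (a, b)) (0, 1)
        + ((rx₂ - ry₂ : ℝ) : ℂ) * Φ₂ (phi (a, b))
        + ((r₂ (a, b) * (-2 / (a + b)) : ℝ) : ℂ) * fderiv ℝ Φ₂ (phi (a, b)) (0, 1) := by
  have habne : a + b ≠ 0 := ne_of_gt hab
  have hX : HasDerivAt
      (fun u => ((r₁ (u, b) : ℝ) : ℂ) * Φ₁ (phi (u, b)) + ((r₂ (u, b) : ℝ) : ℂ) * Φ₂ (phi (u, b)))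
      ((((rx₁ : ℝ) : ℂ) * Φ₁ (phi (a, b))
        + ((r₁ (a, b) : ℝ) : ℂ) * fderiv ℝ Φ₁ (phi (a, b)) (1, -2 * b / (a + b) ^ 2))
        + (((rx₂ : ℝ) : ℂ) * Φ₂ (phi (a, b))
        + ((r₂ (a, b) : ℝ) : ℂ) * fderiv ℝ Φ₂ (phi (a, b)) (1, -2 * b / (a + b) ^ 2))) a :=
    (slicemul Φ₁ (phi_x habne) hrx₁ hΦ₁).add (slicemul Φ₂ (phi_x habne) hrx₂ hΦ₂)
  have hY : HasDerivAt
      (fun u => ((r₁ (a, u) : ℝ) : ℂ) * Φ₁ (phi (a, u)) + ((r₂ (a, u) : ℝ) : ℂ) * Φ₂ (phi (a, u)))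
      ((((ry₁ : ℝ) : ℂ) * Φ₁ (phi (a, b))
        + ((r₁ (a, b) : ℝ) : ℂ) * fderiv ℝ Φ₁ (phi (a, b)) (1, 2 * a / (a + b) ^ 2))
        + (((ry₂ : ℝ) : ℂ) * Φ₂ (phi (a, b))
        + ((r₂ (a, b) : ℝ) : ℂ) * fderiv ℝ Φ₂ (phi (a, b)) (1, 2 * a / (a + b) ^ 2))) b :=
    (slicemul Φ₁ (phi_y habne) hry₁ hΦ₁).add (slicemul Φ₂ (phi_y habne) hry₂ hΦ₂)
  have hvec : ((1 : ℝ), -2 * b / (a + b) ^ 2) - ((1 : ℝ), 2 * a / (a + b) ^ 2)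
      = (-2 / (a + b)) • ((0 : ℝ), (1 : ℝ)) := by
    rw [Prod.mk_sub_mk, Prod.smul_mk, Prod.mk.injEq]
    constructor
    · simp
    · rw [smul_eq_mul, mul_one]
      field_simp
      ring
  have key₁ : fderiv ℝ Φ₁ (phi (a, b)) (1, -2 * b / (a + b) ^ 2)
        - fderiv ℝ Φ₁ (phi (a, b)) (1, 2 * a / (a + b) ^ 2)
      = ((-2 / (a + b) : ℝ) : ℂ) * fderiv ℝ Φ₁ (phi (a, b)) (0, 1) := by
    rw [← ContinuousLinearMap.map_sub, hvec, ContinuousLinearMap.map_smul, Complex.real_smul]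
  have key₂ : fderiv ℝ Φ₂ (phi (a, b)) (1, -2 * b / (a + b) ^ 2)
        - fderiv ℝ Φ₂ (phi (a, b)) (1, 2 * a / (a + b) ^ 2)
      = ((-2 / (a + b) : ℝ) : ℂ) * fderiv ℝ Φ₂ (phi (a, b)) (0, 1) := by
    rw [← ContinuousLinearMap.map_sub, hvec, ContinuousLinearMap.map_smul, Complex.real_smul]
  simp only [Dxy, pdx, pdy]
  rw [hX.deriv, hY.deriv]
  push_cast at key₁ key₂ ⊢
  linear_combination ((r₁ (a, b) : ℝ) : ℂ) * key₁ + ((r₂ (a, b) : ℝ) : ℂ) * key₂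

lemma alg1 (A B : ℝ) (h : A + B ≠ 0) :
    -2 * B ^ 2 / (A + B) ^ 2
      = 1 * B * (-2 / (A + B)) + A * B * ((0 * (A + B) - -2 * 1) / (A + B) ^ 2) := by
  field_simp
  ring

lemma alg2 (A B : ℝ) (h : A + B ≠ 0) :
    -2 * A ^ 2 / (A + B) ^ 2
      = A * 1 * (-2 / (A + B)) + A * B * ((0 * (A + B) - -2 * 1) / (A + B) ^ 2) := by
  field_simp
  ring

/-- for `F` twice continuously differentiable on `(0,∞) × (−1,1)` and
`G(x,y) = F(x+y, (y−x)/(x+y))`, at `(x,y) = (s(1−v)/2, s(1+v)/2)` one has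
`(∂_x−∂_y)²(xyG) + (∂_x−∂_y)((x−y)G) = (1−v²) ∂²F/∂v² − 2v ∂F/∂v`,
i.e. under the change of variables the operator becomes the Legendre operator. -/
theorem statement16 (F : ℝ × ℝ → ℂ)
    (hF : ContDiffOn ℝ 2 F (Set.Ioi (0 : ℝ) ×ˢ Set.Ioo (-1 : ℝ) 1))
    (s v : ℝ) (hs : 0 < s) (hv : v ∈ Set.Ioo (-1 : ℝ) 1) :
    Dxy (Dxy (fun p => ((p.1 * p.2 : ℝ) : ℂ) *
          F (p.1 + p.2, (p.2 - p.1) / (p.1 + p.2)))) (s * (1 - v) / 2, s * (1 + v) / 2)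
      + Dxy (fun p => ((p.1 - p.2 : ℝ) : ℂ) *
          F (p.1 + p.2, (p.2 - p.1) / (p.1 + p.2))) (s * (1 - v) / 2, s * (1 + v) / 2)
    = ((1 - v ^ 2 : ℝ) : ℂ) * pdy (pdy F) (s, v)
      - ((2 * v : ℝ) : ℂ) * pdy F (s, v) := by
  obtain ⟨hv1, hv2⟩ := hv
  have hsne : s ≠ 0 := ne_of_gt hs
  have hx0 : 0 < s * (1 - v) / 2 := by nlinarith
  have hy0 : 0 < s * (1 + v) / 2 := by nlinarith
  have hsum : s * (1 - v) / 2 + s * (1 + v) / 2 = s := by ring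
  have hU : IsOpen (Set.Ioi (0 : ℝ) ×ˢ Set.Ioo (-1 : ℝ) 1) := isOpen_Ioi.prod isOpen_Ioo
  have hVo : IsOpen (Set.Ioi (0 : ℝ) ×ˢ Set.Ioi (0 : ℝ)) := isOpen_Ioi.prod isOpen_Ioi
  have hFd : ∀ q ∈ Set.Ioi (0 : ℝ) ×ˢ Set.Ioo (-1 : ℝ) 1, DifferentiableAt ℝ F q := fun q hq =>
    (hF.differentiableOn (by norm_num)).differentiableAt (hU.mem_nhds hq)
  have hFvC : ContDiffOn ℝ 1 (fun q => fderiv ℝ F q (0, 1))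
      (Set.Ioi (0 : ℝ) ×ˢ Set.Ioo (-1 : ℝ) 1) :=
    (hF.fderiv_of_isOpen hU (by norm_num)).clm_apply contDiffOn_const
  have hFvd : ∀ q ∈ Set.Ioi (0 : ℝ) ×ˢ Set.Ioo (-1 : ℝ) 1,
      DifferentiableAt ℝ (fun q => fderiv ℝ F q (0, 1)) q := fun q hq =>
    (hFvC.differentiableOn one_ne_zero).differentiableAt (hU.mem_nhds hq)
  have hmem : ∀ a b : ℝ, 0 < a → 0 < b →
      phi (a, b) ∈ Set.Ioi (0 : ℝ) ×ˢ Set.Ioo (-1 : ℝ) 1 := by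
    intro a b ha hb
    have hab : (0 : ℝ) < a + b := by linarith
    refine Set.mem_prod.mpr ⟨?_, ?_, ?_⟩
    · simpa [phi] using hab
    · show -1 < (b - a) / (a + b)
      rw [lt_div_iff₀ hab]
      linarith
    · show (b - a) / (a + b) < 1
      rw [div_lt_one hab]
      linarith
  have hphi0 : phi (s * (1 - v) / 2, s * (1 + v) / 2) = (s, v) := by
    simp only [phi]
    rw [Prod.mk.injEq]
    constructor
    · exact hsum
    · rw [hsum, show s * (1 + v) / 2 - s * (1 - v) / 2 = s * v from by ring]
      field_simp
  have hsv : (s, v) ∈ Set.Ioi (0 : ℝ) ×ˢ Set.Ioo (-1 : ℝ) 1 :=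
    Set.mem_prod.mpr ⟨hs, hv1, hv2⟩
  have hcy : HasDerivAt (fun t : ℝ => ((s : ℝ), t)) ((0 : ℝ), (1 : ℝ)) v :=
    (hasDerivAt_const v s).prodMk (hasDerivAt_id v)
  have hpdy1 : pdy F (s, v) = fderiv ℝ F (s, v) (0, 1) :=
    ((hFd _ hsv).hasFDerivAt.comp_hasDerivAt v hcy).deriv
  have hpdy2 : pdy (pdy F) (s, v) = fderiv ℝ (fun q => fderiv ℝ F q (0, 1)) (s, v) (0, 1) := by
    have heq : (fun t => pdy F (s, t)) =ᶠ[nhds v] fun t => fderiv ℝ F (s, t) (0, 1) := by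
      filter_upwards [Ioo_mem_nhds hv1 hv2] with t ht
      have hsvt : ((s : ℝ), t) ∈ Set.Ioi (0 : ℝ) ×ˢ Set.Ioo (-1 : ℝ) 1 :=
        Set.mem_prod.mpr ⟨hs, ht⟩
      have hct : HasDerivAt (fun u : ℝ => ((s : ℝ), u)) ((0 : ℝ), (1 : ℝ)) t :=
        (hasDerivAt_const t s).prodMk (hasDerivAt_id t)
      exact ((hFd _ hsvt).hasFDerivAt.comp_hasDerivAt t hct).deriv
    show deriv (fun t => pdy F (s, t)) v = _
    rw [heq.deriv_eq]
    exact ((hFvd _ hsv).hasFDerivAt.comp_hasDerivAt v hcy).deriv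
  have hp0V : (s * (1 - v) / 2, s * (1 + v) / 2) ∈ Set.Ioi (0 : ℝ) ×ˢ Set.Ioi (0 : ℝ) :=
    Set.mem_prod.mpr ⟨hx0, hy0⟩
  -- inner computation on the quadrant
  have hinner : ∀ q ∈ Set.Ioi (0 : ℝ) ×ˢ Set.Ioi (0 : ℝ),
      Dxy (fun p => ((p.1 * p.2 : ℝ) : ℂ) * F (phi p)) q
        = ((q.2 - q.1 : ℝ) : ℂ) * F (phi q)
          + ((q.1 * q.2 * (-2 / (q.1 + q.2)) : ℝ) : ℂ) * fderiv ℝ F (phi q) (0, 1) := by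
    rintro ⟨a, b⟩ hab'
    obtain ⟨ha, hb⟩ := hab'
    have ha' : (0 : ℝ) < a := ha
    have hb' : (0 : ℝ) < b := hb
    have hab : (0 : ℝ) < a + b := by linarith
    have hrx : HasDerivAt (fun t : ℝ => t * b) b a := by
      simpa using (hasDerivAt_id a).mul_const b
    have hry : HasDerivAt (fun t : ℝ => a * t) a b := by
      simpa using (hasDerivAt_id b).const_mul a
    exact master F (fun q => q.1 * q.2) a b b a hab hrx hry (hFd _ (hmem a b ha' hb'))
  have e1 : Dxy (Dxy (fun p => ((p.1 * p.2 : ℝ) : ℂ) * F (phi p)))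
        (s * (1 - v) / 2, s * (1 + v) / 2)
      = Dxy (fun q => ((q.2 - q.1 : ℝ) : ℂ) * F (phi q)
          + ((q.1 * q.2 * (-2 / (q.1 + q.2)) : ℝ) : ℂ) * fderiv ℝ F (phi q) (0, 1))
        (s * (1 - v) / 2, s * (1 + v) / 2) :=
    Dxy_congr hVo hp0V hinner
  have habP : (0 : ℝ) < s * (1 - v) / 2 + s * (1 + v) / 2 := by rw [hsum]; exact hs
  have hneP : s * (1 - v) / 2 + s * (1 + v) / 2 ≠ 0 := ne_of_gt habP
  -- slice derivatives for r₁ q = q.2 - q.1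
  have hrx₁ : HasDerivAt (fun t : ℝ => s * (1 + v) / 2 - t) (-1 : ℝ) (s * (1 - v) / 2) := by
    simpa using (hasDerivAt_id (s * (1 - v) / 2)).const_sub (s * (1 + v) / 2)
  have hry₁ : HasDerivAt (fun t : ℝ => t - s * (1 - v) / 2) (1 : ℝ) (s * (1 + v) / 2) :=
    (hasDerivAt_id (s * (1 + v) / 2)).sub_const (s * (1 - v) / 2)
  -- slice derivatives for r₂ q = q.1 * q.2 * (-2/(q.1+q.2))
  have hrx₂ : HasDerivAt (fun t : ℝ => t * (s * (1 + v) / 2) * (-2 / (t + s * (1 + v) / 2)))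
      (-2 * (s * (1 + v) / 2) ^ 2 / (s * (1 - v) / 2 + s * (1 + v) / 2) ^ 2)
      (s * (1 - v) / 2) := by
    have h1 : HasDerivAt (fun t : ℝ => t * (s * (1 + v) / 2)) (1 * (s * (1 + v) / 2))
        (s * (1 - v) / 2) := (hasDerivAt_id _).mul_const _
    have hden : HasDerivAt (fun t : ℝ => t + s * (1 + v) / 2) 1 (s * (1 - v) / 2) :=
      (hasDerivAt_id _).add_const _
    have h2 := (hasDerivAt_const (s * (1 - v) / 2) (-2 : ℝ)).div hden hneP
    have := h1.mul h2
    exact this.congr_deriv (alg1 _ _ hneP).symm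
  have hry₂ : HasDerivAt (fun t : ℝ => s * (1 - v) / 2 * t * (-2 / (s * (1 - v) / 2 + t)))
      (-2 * (s * (1 - v) / 2) ^ 2 / (s * (1 - v) / 2 + s * (1 + v) / 2) ^ 2)
      (s * (1 + v) / 2) := by
    have h1 : HasDerivAt (fun t : ℝ => s * (1 - v) / 2 * t) (s * (1 - v) / 2 * 1)
        (s * (1 + v) / 2) := (hasDerivAt_id _).const_mul _
    have hden : HasDerivAt (fun t : ℝ => s * (1 - v) / 2 + t) 1 (s * (1 + v) / 2) := by
      simpa using (hasDerivAt_id (s * (1 + v) / 2)).const_add (s * (1 - v) / 2)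
    have h2 := (hasDerivAt_const (s * (1 + v) / 2) (-2 : ℝ)).div hden hneP
    have := h1.mul h2
    exact this.congr_deriv (alg2 _ _ hneP).symm
  have e2 := master2 F (fun q => fderiv ℝ F q (0, 1))
      (fun q => q.2 - q.1) (fun q => q.1 * q.2 * (-2 / (q.1 + q.2)))
      (s * (1 - v) / 2) (s * (1 + v) / 2) (-1) 1
      (-2 * (s * (1 + v) / 2) ^ 2 / (s * (1 - v) / 2 + s * (1 + v) / 2) ^ 2)
      (-2 * (s * (1 - v) / 2) ^ 2 / (s * (1 - v) / 2 + s * (1 + v) / 2) ^ 2)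
      habP hrx₁ hry₁ hrx₂ hry₂
      (hFd _ (hmem _ _ hx0 hy0)) (hFvd _ (hmem _ _ hx0 hy0))
  have hrx₃ : HasDerivAt (fun t : ℝ => t - s * (1 + v) / 2) (1 : ℝ) (s * (1 - v) / 2) :=
    (hasDerivAt_id _).sub_const _
  have hry₃ : HasDerivAt (fun t : ℝ => s * (1 - v) / 2 - t) (-1 : ℝ) (s * (1 + v) / 2) := by
    simpa using (hasDerivAt_id (s * (1 + v) / 2)).const_sub (s * (1 - v) / 2)
  have e3 := master F (fun q => q.1 - q.2) (s * (1 - v) / 2) (s * (1 + v) / 2) 1 (-1)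
      habP hrx₃ hry₃ (hFd _ (hmem _ _ hx0 hy0))
  rw [hphi0] at e2 e3
  show Dxy (Dxy (fun p => ((p.1 * p.2 : ℝ) : ℂ) * F (phi p)))
        (s * (1 - v) / 2, s * (1 + v) / 2)
      + Dxy (fun p => ((p.1 - p.2 : ℝ) : ℂ) * F (phi p)) (s * (1 - v) / 2, s * (1 + v) / 2)
    = ((1 - v ^ 2 : ℝ) : ℂ) * pdy (pdy F) (s, v) - ((2 * v : ℝ) : ℂ) * pdy F (s, v)
  rw [e1, e2, e3, hpdy1, hpdy2]
  -- now simplify the real coefficients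
  have hc2 : (s * (1 + v) / 2 - s * (1 - v) / 2) * (-2 / (s * (1 - v) / 2 + s * (1 + v) / 2))
      = -2 * v := by
    rw [hsum, show s * (1 + v) / 2 - s * (1 - v) / 2 = s * v from by ring]
    field_simp
  have hc3 : (-2 * (s * (1 + v) / 2) ^ 2 / (s * (1 - v) / 2 + s * (1 + v) / 2) ^ 2
        - -2 * (s * (1 - v) / 2) ^ 2 / (s * (1 - v) / 2 + s * (1 + v) / 2) ^ 2)
      = -2 * v := by
    rw [hsum]
    field_simp
    ring
  have hc4 : (s * (1 - v) / 2 * (s * (1 + v) / 2) * (-2 / (s * (1 - v) / 2 + s * (1 + v) / 2)))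
        * (-2 / (s * (1 - v) / 2 + s * (1 + v) / 2)) = 1 - v ^ 2 := by
    rw [hsum]
    field_simp
    ring
  have hc5 : (s * (1 - v) / 2 - s * (1 + v) / 2) * (-2 / (s * (1 - v) / 2 + s * (1 + v) / 2))
      = 2 * v := by
    rw [hsum, show s * (1 - v) / 2 - s * (1 + v) / 2 = -(s * v) from by ring]
    field_simp
  push_cast [hc2, hc3, hc4, hc5]
  ring
end
end

section
/- Let Π = {ζ ∈ ℂ : Im ζ > 0}, ℓ ∈ ℕ, and let f be holomorphic on Π×Π. For g = [[a,b],[c,d]] ∈ SL(2,ℝ), define f^g(ζ₁,ζ₂) := (cζ₁+d)^{−1}(cζ₂+d)^{−1} f((aζ₁+b)/(cζ₁+d), (aζ₂+b)/(cζ₂+d)), a holomorphic function on Π×Π. Then for every z ∈ Π, (R_ℓ (f^g))(z) = (cz+d)^{−2ℓ−2} (R_ℓ f)((az+b)/(cz+d)). -/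
open Complex

noncomputable section

/-- The `ℓ`-th Rankin–Cohen bracket
`(R_ℓ f)(z) = Σ_{j=0}^{ℓ} (−1)^j (ℓ choose j)² ∂^ℓ f/∂ζ₁^{ℓ−j}∂ζ₂^{j} (z,z)`. -/
def RCb (ℓ : ℕ) (f : ℂ × ℂ → ℂ) (z : ℂ) : ℂ :=
  ∑ j ∈ Finset.range (ℓ + 1),
    (-1 : ℂ) ^ j * (ℓ.choose j : ℂ) ^ 2 * (pd1^[ℓ - j] (pd2^[j] f)) (z, z)

open Metric MeasureTheory Real Topology Filter Finset

abbrev UH : Set ℂ := {ζ : ℂ | 0 < ζ.im}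

lemma isOpen_UH : IsOpen UH := isOpen_lt continuous_const Complex.continuous_im

section moebius
variable {a b c d : ℝ} (hdet : a * d - b * c = 1)

include hdet in
lemma den_ne {z : ℂ} (hz : 0 < z.im) : (c : ℂ) * z + d ≠ 0 := by
  intro h
  have him : ((c : ℂ) * z + d).im = c * z.im := by
    simp [Complex.add_im, Complex.mul_im]
  have hc : c = 0 := by
    by_contra hc
    have := congrArg Complex.im h
    rw [him] at this
    simp at this
    rcases this with h1 | h1 <;> [exact hc h1; exact absurd h1 hz.ne']
  have hd : (d : ℂ) = 0 := by simpa [hc] using h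
  have : (d : ℝ) = 0 := by exact_mod_cast hd
  rw [hc, this] at hdet; simp at hdet

include hdet in
lemma im_moebius {z : ℂ} (hz : 0 < z.im) :
    0 < ((((a : ℂ) * z + b)) / ((c : ℂ) * z + d)).im := by
  have hne : (c : ℂ) * z + d ≠ 0 := den_ne hdet hz
  have hsq : 0 < Complex.normSq ((c : ℂ) * z + d) := by rwa [Complex.normSq_pos]
  rw [Complex.div_im, div_sub_div_same]
  have : ((a : ℂ) * z + b).im * ((c : ℂ) * z + d).re -
      ((a : ℂ) * z + b).re * ((c : ℂ) * z + d).im = (a * d - b * c) * z.im := by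
    simp only [Complex.add_im, Complex.add_re, Complex.mul_im, Complex.mul_re,
      Complex.ofReal_re, Complex.ofReal_im]
    ring
  rw [this, hdet, one_mul]
  positivity

include hdet in
lemma hasDerivAt_moebius {z : ℂ} (hz : 0 < z.im) :
    HasDerivAt (fun ζ => ((a : ℂ) * ζ + b) / ((c : ℂ) * ζ + d))
      (((c : ℂ) * z + d) ^ (-2 : ℤ)) z := by
  have hne : (c : ℂ) * z + d ≠ 0 := den_ne hdet hz
  have h1 : HasDerivAt (fun ζ : ℂ => (a : ℂ) * ζ + b) a z := by
    simpa using ((hasDerivAt_id z).const_mul (a : ℂ)).add_const (b : ℂ)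
  have h2 : HasDerivAt (fun ζ : ℂ => (c : ℂ) * ζ + d) c z := by
    simpa using ((hasDerivAt_id z).const_mul (c : ℂ)).add_const (d : ℂ)
  have := h1.div h2 hne
  refine this.congr_deriv ?_
  have hdetC : (a : ℂ) * d - b * c = 1 := by exact_mod_cast hdet
  have hnum : (a : ℂ) * ((c : ℂ) * z + d) - ((a : ℂ) * z + b) * c = 1 := by
    linear_combination hdetC
  rw [hnum, zpow_neg, one_div]
  norm_cast

end moebius

/-- slicing lemma for iterated pd1 -/
lemma pd1_iter (f : ℂ × ℂ → ℂ) (m : ℕ) (z1 z2 : ℂ) :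
    (pd1^[m] f) (z1, z2) = deriv^[m] (fun w => f (w, z2)) z1 := by
  induction m generalizing z1 with
  | zero => rfl
  | succ m ih =>
    rw [Function.iterate_succ_apply', Function.iterate_succ_apply']
    simp only [pd1]
    congr 1
    funext w
    exact ih w

lemma pd2_iter (f : ℂ × ℂ → ℂ) (m : ℕ) (z1 z2 : ℂ) :
    (pd2^[m] f) (z1, z2) = deriv^[m] (fun w => f (z1, w)) z2 := by
  induction m generalizing z2 with
  | zero => rfl
  | succ m ih =>
    rw [Function.iterate_succ_apply', Function.iterate_succ_apply']
    simp only [pd2]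
    congr 1
    funext w
    exact ih w

/-- pulling constants out of iterated derivs (unconditional over fields) -/
lemma iter_deriv_const_mul (k : ℂ) (h : ℂ → ℂ) (n : ℕ) :
    deriv^[n] (fun x => k * h x) = fun x => k * deriv^[n] h x := by
  induction n with
  | zero => rfl
  | succ n ih =>
    rw [Function.iterate_succ_apply', Function.iterate_succ_apply', ih]
    exact deriv_const_mul_field' k


/-- KEY regularity lemma: iterated second-variable partials of a function holomorphic on
`Π × Π` are holomorphic in the first variable. -/
lemma pd2_iter_slice_diff (f : ℂ × ℂ → ℂ)
    (hf : DifferentiableOn ℂ f (UH ×ˢ UH)) (s : ℕ) {v : ℂ} (hv : 0 < v.im) :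
    DifferentiableOn ℂ (fun w => (pd2^[s] f) (w, v)) UH := by
  -- radius
  set R : NNReal := ⟨v.im / 2, by positivity⟩ with hRdef
  have hR : (0 : NNReal) < R := by
    rw [← NNReal.coe_lt_coe]
    show (0:ℝ) < v.im / 2
    positivity
  have hRR : (R : ℝ) = v.im / 2 := rfl
  have hRpos : (0:ℝ) < R := by rw [hRR]; positivity
  have hball : closedBall v (R : ℝ) ⊆ UH := by
    intro u hu
    have h1 : |(u - v).im| ≤ dist u v := by
      rw [Complex.dist_eq]
      exact Complex.abs_im_le_norm (u - v)
    have h2 : dist u v ≤ (R:ℝ) := mem_closedBall.mp hu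
    have : |u.im - v.im| ≤ v.im / 2 := by
      rw [← hRR]; simpa [Complex.sub_im] using h1.trans h2
    have := abs_le.mp this
    show 0 < u.im
    linarith [this.1]
  -- slices
  have hslice1 : ∀ u ∈ UH, DifferentiableOn ℂ (fun w => f (w, u)) UH := by
    intro u hu
    exact hf.comp (differentiableOn_id.prodMk (differentiableOn_const u))
      (fun w hw => Set.mk_mem_prod hw hu)
  have hslice2 : ∀ w ∈ UH, DifferentiableOn ℂ (fun u => f (w, u)) UH := by
    intro w hw
    exact hf.comp ((differentiableOn_const w).prodMk differentiableOn_id)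
      (fun u hu => Set.mk_mem_prod hw hu)
  have hUHcirc : ∀ θ : ℝ, circleMap v (R:ℝ) θ ∈ UH :=
    fun θ => hball (sphere_subset_closedBall (circleMap_mem_sphere v hRpos.le θ))
  -- representation via the Cauchy integral formula for derivatives
  have hrep : ∀ w ∈ UH, (pd2^[s] f) (w, v) =
      (s.factorial : ℂ) * ((2 * π * I : ℂ)⁻¹ *
        ∮ u in C(v, (R:ℝ)), ((u - v)⁻¹) ^ s * ((u - v)⁻¹ * f (w, u))) := by
    intro w hw
    have hd : DifferentiableOn ℂ (fun u => f (w, u)) (closedBall v (R:ℝ)) :=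
      (hslice2 w hw).mono hball
    have hps := hd.hasFPowerSeriesOnBall hR
    have h1 := hps.factorial_smul (1 : ℂ) s
    rw [pd2_iter f s w v, ← iteratedDeriv_eq_iterate, iteratedDeriv_eq_iteratedFDeriv, ← h1,
      cauchyPowerSeries_apply]
    simp only [smul_eq_mul, nsmul_eq_mul, one_div]
  -- the integral representation is differentiable in `w`
  have hg : DifferentiableOn ℂ (fun w => (s.factorial : ℂ) * ((2 * π * I : ℂ)⁻¹ *
      ∮ u in C(v, (R:ℝ)), ((u - v)⁻¹) ^ s * ((u - v)⁻¹ * f (w, u)))) UH := by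
    intro w0 hw0
    apply DifferentiableAt.differentiableWithinAt
    apply DifferentiableAt.const_mul
    apply DifferentiableAt.const_mul
    -- set up
    obtain ⟨ε', hε', hb⟩ := Metric.isOpen_iff.mp isOpen_UH w0 hw0
    set ε : ℝ := ε' / 3 with hεdef
    have hε : 0 < ε := by positivity
    have hsub2 : closedBall w0 (2 * ε) ⊆ UH := by
      intro x hx
      apply hb
      rw [mem_ball]
      calc dist x w0 ≤ 2 * ε := mem_closedBall.mp hx
        _ < ε' := by rw [hεdef]; linarith
    -- bound on f on a compact set
    have hK : IsCompact (closedBall w0 (2*ε) ×ˢ sphere v (R:ℝ)) :=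
      (isCompact_closedBall _ _).prod (isCompact_sphere _ _)
    have hKsub : closedBall w0 (2*ε) ×ˢ sphere v (R:ℝ) ⊆ UH ×ˢ UH :=
      Set.prod_mono hsub2 (fun u hu => hball (sphere_subset_closedBall hu))
    obtain ⟨M, hM⟩ := hK.exists_bound_of_continuousOn (hf.continuousOn.mono hKsub)
    have hM0 : 0 ≤ M := le_trans (norm_nonneg _)
      (hM (w0, circleMap v (R:ℝ) 0) ⟨mem_closedBall_self (by positivity),
        circleMap_mem_sphere v hRpos.le 0⟩)
    -- Cauchy estimate on first-variable derivative
    have hpd1bound : ∀ x ∈ ball w0 ε, ∀ θ : ℝ,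
        ‖deriv (fun y => f (y, circleMap v (R:ℝ) θ)) x‖ ≤ M / ε := by
      intro x hx θ
      set u := circleMap v (R:ℝ) θ
      have hu : u ∈ sphere v (R:ℝ) := circleMap_mem_sphere v hRpos.le θ
      have hballx : closedBall x ε ⊆ closedBall w0 (2*ε) := by
        intro y hy
        rw [mem_closedBall] at *
        calc dist y w0 ≤ dist y x + dist x w0 := dist_triangle _ _ _
          _ ≤ ε + ε := add_le_add hy (le_of_lt (mem_ball.mp hx))
          _ = 2 * ε := by ring
      have hdc : DiffContOnCl ℂ (fun y => f (y, u)) (ball x ε) := by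
        apply DifferentiableOn.diffContOnCl
        apply (hslice1 u (hball (sphere_subset_closedBall hu))).mono
        exact (closure_ball_subset_closedBall).trans (hballx.trans hsub2)
      apply norm_deriv_le_of_forall_mem_sphere_norm_le hε hdc
      intro y hy
      exact hM (y, u) ⟨hballx (sphere_subset_closedBall hy), hu⟩
    -- differentiate under the integral sign
    set F : ℂ → ℝ → ℂ := fun x θ => (circleMap 0 (R:ℝ) θ * I) •
      (((circleMap v (R:ℝ) θ - v)⁻¹) ^ s *
        ((circleMap v (R:ℝ) θ - v)⁻¹ * f (x, circleMap v (R:ℝ) θ))) with hFdef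
    set F' : ℝ → ℂ := fun θ => (circleMap 0 (R:ℝ) θ * I) •
      (((circleMap v (R:ℝ) θ - v)⁻¹) ^ s *
        ((circleMap v (R:ℝ) θ - v)⁻¹ *
          deriv (fun y => f (y, circleMap v (R:ℝ) θ)) w0)) with hF'def
    have hAbs : ∀ θ : ℝ, ‖circleMap v (R:ℝ) θ - v‖ = (R:ℝ) := by
      intro θ
      rw [circleMap_sub_center, norm_circleMap_zero, _root_.abs_of_pos hRpos]
    have hne : ∀ θ : ℝ, circleMap v (R:ℝ) θ - v ≠ 0 := by
      intro θ h
      have := hAbs θ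
      rw [h, norm_zero] at this
      exact hRpos.ne' this.symm
    have hinv : Continuous (fun θ => (circleMap v (R:ℝ) θ - v)⁻¹) :=
      Continuous.inv₀ (((continuous_circleMap v (R:ℝ))).sub continuous_const) hne
    have hFcont : ∀ x ∈ UH, Continuous (F x) := by
      intro x hx
      apply Continuous.smul ((continuous_circleMap 0 (R:ℝ)).mul continuous_const)
      apply Continuous.mul (hinv.pow s)
      apply Continuous.mul hinv
      apply hf.continuousOn.comp_continuous
      · exact continuous_const.prodMk (continuous_circleMap v (R:ℝ))
      · exact fun θ => Set.mk_mem_prod hx (hUHcirc θ)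
    -- measurability of the derivative integrand
    have hmeas : AEStronglyMeasurable (fun θ => deriv (fun y => f (y, circleMap v (R:ℝ) θ)) w0)
        (volume.restrict (Set.uIoc 0 (2*π))) := by
      apply aestronglyMeasurable_of_tendsto_ae (u := Filter.atTop)
        (f := fun (n : ℕ) θ => slope (fun y => f (y, circleMap v (R:ℝ) θ)) w0
          (w0 + ((1 / ((n:ℝ)+1) : ℝ) : ℂ)))
      · intro n
        apply Continuous.aestronglyMeasurable
        simp only [slope_def_field]
        apply Continuous.div_const
        apply Continuous.sub
        · apply hf.continuousOn.comp_continuous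
          · exact continuous_const.prodMk (continuous_circleMap v (R:ℝ))
          · intro θ
            apply Set.mk_mem_prod _ (hUHcirc θ)
            show 0 < (w0 + ((1 / ((n:ℝ)+1) : ℝ) : ℂ)).im
            simp only [Complex.add_im, Complex.ofReal_im, add_zero]
            exact hw0
        · apply hf.continuousOn.comp_continuous
          · exact continuous_const.prodMk (continuous_circleMap v (R:ℝ))
          · exact fun θ => Set.mk_mem_prod hw0 (hUHcirc θ)
      · apply Filter.Eventually.of_forall
        intro θ
        have hder : HasDerivAt (fun y => f (y, circleMap v (R:ℝ) θ))
            (deriv (fun y => f (y, circleMap v (R:ℝ) θ)) w0) w0 := by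
          apply DifferentiableAt.hasDerivAt
          exact (hslice1 _ (hUHcirc θ)).differentiableAt (isOpen_UH.mem_nhds hw0)
        rw [hasDerivAt_iff_tendsto_slope] at hder
        apply hder.comp
        apply Filter.tendsto_inf.mpr
        constructor
        · have h0 : Filter.Tendsto (fun n : ℕ => ((1 / ((n:ℝ)+1) : ℝ) : ℂ)) Filter.atTop (𝓝 0) := by
            rw [show ((0:ℂ)) = ((0:ℝ):ℂ) by norm_num]
            apply Filter.Tendsto.comp (Complex.continuous_ofReal.tendsto 0)
            exact tendsto_one_div_add_atTop_nhds_zero_nat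
          have := h0.const_add w0
          simpa using this
        · apply Filter.tendsto_principal.mpr
          apply Filter.Eventually.of_forall
          intro n
          simp only [Set.mem_compl_iff, Set.mem_singleton_iff]
          intro h
          have : ((1 / ((n:ℝ)+1) : ℝ) : ℂ) = 0 := by linear_combination h
          rw [Complex.ofReal_eq_zero] at this
          have : (0:ℝ) < 1 / ((n:ℝ)+1) := by positivity
          simp_all
    -- the main application
    have key := intervalIntegral.hasDerivAt_integral_of_dominated_loc_of_lip
      (F := F) (F' := F') (x₀ := w0) (a := 0) (b := 2*π)
      (bound := fun _ => (R:ℝ) * ((R:ℝ)⁻¹ ^ s * ((R:ℝ)⁻¹ * (M / ε)))) (μ := volume)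
      (ball_mem_nhds w0 hε) ?_ ?_ ?_ ?_ ?_ ?_
    · -- conclude differentiability
      have heq : (fun w => ∮ u in C(v, (R:ℝ)), ((u - v)⁻¹) ^ s * ((u - v)⁻¹ * f (w, u)))
          = fun w => ∫ θ in (0:ℝ)..(2*π), F w θ := by
        funext w
        rw [circleIntegral]
        apply intervalIntegral.integral_congr
        intro θ _
        simp only [deriv_circleMap, hFdef]
      rw [heq]
      exact key.2.differentiableAt
    · -- hF_meas
      filter_upwards [isOpen_UH.mem_nhds hw0] with x hx
      exact (hFcont x hx).aestronglyMeasurable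
    · -- hF_int
      exact (hFcont w0 hw0).intervalIntegrable _ _
    · -- hF'_meas
      have hF'eq : F' = fun θ => ((circleMap 0 (R:ℝ) θ * I) *
          (((circleMap v (R:ℝ) θ - v)⁻¹) ^ s * (circleMap v (R:ℝ) θ - v)⁻¹)) *
            deriv (fun y => f (y, circleMap v (R:ℝ) θ)) w0 := by
        funext θ
        rw [hF'def]
        simp only [smul_eq_mul]
        ring
      rw [hF'eq]
      apply AEStronglyMeasurable.mul _ hmeas
      exact (((continuous_circleMap 0 (R:ℝ)).mul continuous_const).mul
        ((hinv.pow s).mul hinv)).aestronglyMeasurable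
    · -- h_lipsch
      apply Filter.Eventually.of_forall
      intro θ _
      apply Convex.lipschitzOnWith_of_nnnorm_hasDerivWithin_le (convex_ball w0 ε)
        (f' := fun x => (circleMap 0 (R:ℝ) θ * I) •
          (((circleMap v (R:ℝ) θ - v)⁻¹) ^ s *
            ((circleMap v (R:ℝ) θ - v)⁻¹ * deriv (fun y => f (y, circleMap v (R:ℝ) θ)) x)))
      · intro x hx
        have hxUH : x ∈ UH := hsub2 (closedBall_subset_closedBall (by linarith)
          (ball_subset_closedBall hx))
        have hder : HasDerivAt (fun y => f (y, circleMap v (R:ℝ) θ))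
            (deriv (fun y => f (y, circleMap v (R:ℝ) θ)) x) x :=
          ((hslice1 _ (hUHcirc θ)).differentiableAt (isOpen_UH.mem_nhds hxUH)).hasDerivAt
        exact (((hder.const_mul _).const_mul _).fun_const_smul _).hasDerivWithinAt
      · intro x hx
        rw [← NNReal.coe_le_coe, coe_nnnorm, Real.coe_nnabs]
        rw [_root_.abs_of_nonneg (by positivity)]
        have hnorm : ‖(circleMap 0 (R:ℝ) θ * I) •
            (((circleMap v (R:ℝ) θ - v)⁻¹) ^ s *
              ((circleMap v (R:ℝ) θ - v)⁻¹ * deriv (fun y => f (y, circleMap v (R:ℝ) θ)) x))‖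
            = (R:ℝ) * ((R:ℝ)⁻¹ ^ s * ((R:ℝ)⁻¹ *
              ‖deriv (fun y => f (y, circleMap v (R:ℝ) θ)) x‖)) := by
          simp only [norm_smul, norm_mul, norm_pow, norm_inv, hAbs,
            norm_circleMap_zero, Complex.norm_I, _root_.abs_of_pos hRpos, mul_one]
        rw [hnorm]
        exact mul_le_mul_of_nonneg_left (mul_le_mul_of_nonneg_left
          (mul_le_mul_of_nonneg_left (hpd1bound x hx θ) (by positivity))
          (by positivity)) hRpos.le
    · exact intervalIntegrable_const
    · -- h_diff
      apply Filter.Eventually.of_forall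
      intro θ _
      have hder : HasDerivAt (fun y => f (y, circleMap v (R:ℝ) θ))
          (deriv (fun y => f (y, circleMap v (R:ℝ) θ)) w0) w0 :=
        ((hslice1 _ (hUHcirc θ)).differentiableAt (isOpen_UH.mem_nhds hw0)).hasDerivAt
      exact (((hder.const_mul _).const_mul _).fun_const_smul _)
  exact hg.congr hrep


/-- The coefficients in the transformation law for iterated derivatives. -/
def RCA (n r : ℕ) : ℂ := (n.choose r : ℂ) * (n.factorial : ℂ) / (r.factorial : ℂ)

lemma RCA_zero_of_lt {n r : ℕ} (h : n < r) : RCA n r = 0 := by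
  simp [RCA, Nat.choose_eq_zero_of_lt h]

lemma RCA_self (n : ℕ) : RCA n n = 1 := by
  simp [RCA, Nat.choose_self]
  exact_mod_cast (Nat.factorial_pos n).ne'

lemma RCA_eq {n r : ℕ} (h : r ≤ n) :
    RCA n r = (n.factorial : ℂ)^2 / ((r.factorial : ℂ)^2 * ((n-r).factorial : ℂ)) := by
  rw [RCA, Nat.cast_choose ℂ h]
  have h1 : (r.factorial : ℂ) ≠ 0 := by exact_mod_cast (Nat.factorial_pos r).ne'
  have h2 : ((n-r).factorial : ℂ) ≠ 0 := by exact_mod_cast (Nat.factorial_pos (n-r)).ne'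
  field_simp

lemma RCA_zero (n : ℕ) : RCA n 0 = (n.factorial : ℂ) := by
  simp [RCA]

lemma RCA_rec {n k : ℕ} (h : k < n) :
    RCA (n+1) (k+1) = ((n : ℂ) + (k : ℂ) + 2) * RCA n (k+1) + RCA n k := by
  obtain ⟨m, rfl⟩ : ∃ m, n = k + 1 + m := ⟨n - (k+1), by omega⟩
  rw [RCA_eq (by omega), RCA_eq (by omega), RCA_eq (by omega)]
  have e1 : k + 1 + m + 1 - (k + 1) = m + 1 := by omega
  have e2 : k + 1 + m - (k + 1) = m := by omega
  have e3 : k + 1 + m - k = m + 1 := by omega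
  rw [e1, e2, e3]
  have hfk : ((k.factorial : ℂ)) ≠ 0 := by exact_mod_cast (Nat.factorial_pos k).ne'
  have hfk1 : (((k+1).factorial : ℂ)) ≠ 0 := by exact_mod_cast (Nat.factorial_pos (k+1)).ne'
  have hfm : ((m.factorial : ℂ)) ≠ 0 := by exact_mod_cast (Nat.factorial_pos m).ne'
  have hfm1 : (((m+1).factorial : ℂ)) ≠ 0 := by exact_mod_cast (Nat.factorial_pos (m+1)).ne'
  have hs1 : ((k + 1 + m + 1).factorial : ℂ) = ((k:ℂ) + m + 2) * ((k + 1 + m).factorial : ℂ) := by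
    have : (k + 1 + m + 1).factorial = (k + 1 + m + 1) * (k + 1 + m).factorial :=
      Nat.factorial_succ _
    rw [this]; push_cast; ring
  have hs2 : ((m + 1).factorial : ℂ) = ((m:ℂ) + 1) * (m.factorial : ℂ) := by
    rw [Nat.factorial_succ]; push_cast; ring
  have hs3 : (((k+1)).factorial : ℂ) = ((k:ℂ) + 1) * (k.factorial : ℂ) := by
    rw [Nat.factorial_succ]; push_cast; ring
  rw [hs1, hs2, hs3]
  have hk1 : ((k:ℂ) + 1) ≠ 0 := Nat.cast_add_one_ne_zero k
  have hm1 : ((m:ℂ) + 1) ≠ 0 := Nat.cast_add_one_ne_zero m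
  field_simp
  push_cast
  ring

lemma analyticOnNhd_iter_deriv (G : ℂ → ℂ) (hG : DifferentiableOn ℂ G UH) (r : ℕ) :
    AnalyticOnNhd ℂ (deriv^[r] G) UH := by
  induction r with
  | zero => exact hG.analyticOnNhd isOpen_UH
  | succ r ih =>
    have : deriv^[r+1] G = deriv (deriv^[r] G) := Function.iterate_succ_apply' deriv r G
    rw [this]
    exact ih.deriv

lemma sum_step (n : ℕ) (x u : ℂ) (hx : x ≠ 0) (g : ℕ → ℂ) :
    ∑ r ∈ range (n+1), RCA n r * u^(n-r) *
      (((-1 - (n:ℤ) - (r:ℤ)) : ℂ) * x^(-1 - (n:ℤ) - (r:ℤ) - 1) * (-u) * g r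
        + x^(-1 - (n:ℤ) - (r:ℤ)) * (g (r+1) * x^(-2:ℤ)))
    = ∑ r ∈ range (n+2), RCA (n+1) r * u^(n+1-r) * x^(-1 - ((n:ℤ)+1) - (r:ℤ)) * g r := by
  set P : ℕ → ℂ := fun r => (1 + (n:ℂ) + (r:ℂ)) * RCA n r * u^(n+1-r) *
    x^(-1 - ((n:ℤ)+1) - (r:ℤ)) * g r with hPdef
  set Q : ℕ → ℂ := fun r => RCA n r * u^(n-r) *
    x^(-1 - ((n:ℤ)+1) - ((r:ℤ)+1)) * g (r+1) with hQdef
  set T : ℕ → ℂ := fun r => RCA (n+1) r * u^(n+1-r) *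
    x^(-1 - ((n:ℤ)+1) - (r:ℤ)) * g r with hTdef
  have hsplit : ∀ r ∈ range (n+1), RCA n r * u^(n-r) *
      (((-1 - (n:ℤ) - (r:ℤ)) : ℂ) * x^(-1 - (n:ℤ) - (r:ℤ) - 1) * (-u) * g r
        + x^(-1 - (n:ℤ) - (r:ℤ)) * (g (r+1) * x^(-2:ℤ))) = P r + Q r := by
    intro r hr
    have hrn : r ≤ n := by
      have := mem_range.mp hr; omega
    have h1 : u^(n+1-r) = u^(n-r) * u := by
      rw [← pow_succ]; congr 1; omega
    have h2 : (-1 - (n:ℤ) - (r:ℤ) - 1) = (-1 - ((n:ℤ)+1) - (r:ℤ)) := by ring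
    have h3 : x^(-1 - (n:ℤ) - (r:ℤ)) * x^(-2:ℤ) = x^(-1 - ((n:ℤ)+1) - ((r:ℤ)+1)) := by
      rw [← zpow_add₀ hx]
      congr 1
      ring
    rw [hPdef, hQdef]
    simp only
    rw [h1, h2, ← h3]
    push_cast
    ring
  rw [sum_congr rfl hsplit, sum_add_distrib]
  have hP : ∑ r ∈ range (n+1), P r = (∑ i ∈ range n, P (i+1)) + P 0 := sum_range_succ' P n
  have hQ : ∑ r ∈ range (n+1), Q r = (∑ i ∈ range n, Q i) + Q n := sum_range_succ Q n
  have hT : ∑ r ∈ range (n+2), T r = ((∑ i ∈ range n, T (i+1)) + T (n+1)) + T 0 := by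
    rw [sum_range_succ' T (n+1), sum_range_succ (fun i => T (i+1)) n]
  rw [hP, hQ, hT]
  have hT0 : T 0 = P 0 := by
    rw [hTdef, hPdef]
    simp only [RCA_zero, Nat.cast_zero, Nat.factorial_succ]
    push_cast
    ring
  have hTn : T (n+1) = Q n := by
    rw [hTdef, hQdef]
    simp only [RCA_self, Nat.sub_self, Nat.add_sub_cancel_left, pow_zero]
    push_cast
    ring
  have hTi : ∀ i ∈ range n, T (i+1) = P (i+1) + Q i := by
    intro i hi
    have hin : i < n := mem_range.mp hi
    rw [hTdef, hPdef, hQdef]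
    simp only
    rw [RCA_rec hin]
    have e1 : n + 1 - (i+1) = n - i := by omega
    rw [e1]
    push_cast
    ring
  rw [sum_congr rfl hTi, sum_add_distrib, hT0, hTn]
  ring


/-- One-variable transformation law for iterated derivatives of weight-one slash. -/
lemma transform_deriv_iter {a b c d : ℝ} (hdet : a * d - b * c = 1) (G : ℂ → ℂ)
    (hG : DifferentiableOn ℂ G UH) (n : ℕ) :
    ∀ {z : ℂ}, 0 < z.im →
    deriv^[n] (fun ζ => ((c : ℂ) * ζ + d)⁻¹ * G (((a : ℂ) * ζ + b) / ((c : ℂ) * ζ + d))) z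
    = ∑ r ∈ range (n+1), RCA n r * (-(c : ℂ))^(n-r) *
        ((c : ℂ) * z + d)^(-1 - (n : ℤ) - (r : ℤ)) *
        deriv^[r] G (((a : ℂ) * z + b) / ((c : ℂ) * z + d)) := by
  induction n with
  | zero =>
    intro z hz
    simp [RCA_zero]
  | succ n ih =>
    intro z hz
    have hne : (c : ℂ) * z + d ≠ 0 := den_ne hdet hz
    have hσz : 0 < (((a : ℂ) * z + b) / ((c : ℂ) * z + d)).im := im_moebius hdet hz
    -- replace the iterated derivative by the sum, in a neighborhood
    have hev : deriv^[n+1] (fun ζ => ((c : ℂ) * ζ + d)⁻¹ *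
        G (((a : ℂ) * ζ + b) / ((c : ℂ) * ζ + d))) z
        = deriv (fun w => ∑ r ∈ range (n+1), RCA n r * (-(c : ℂ))^(n-r) *
            ((c : ℂ) * w + d)^(-1 - (n : ℤ) - (r : ℤ)) *
            deriv^[r] G (((a : ℂ) * w + b) / ((c : ℂ) * w + d))) z := by
      rw [Function.iterate_succ_apply']
      apply Filter.EventuallyEq.deriv_eq
      filter_upwards [isOpen_UH.mem_nhds hz] with w hw
      exact ih hw
    rw [hev]
    -- differentiate each term
    have hterm : ∀ r ∈ range (n+1), HasDerivAt (fun w => RCA n r * (-(c : ℂ))^(n-r) *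
        ((c : ℂ) * w + d)^(-1 - (n : ℤ) - (r : ℤ)) *
        deriv^[r] G (((a : ℂ) * w + b) / ((c : ℂ) * w + d)))
        (RCA n r * (-(c : ℂ))^(n-r) *
          (((-1 - (n : ℤ) - (r : ℤ)) : ℂ) * ((c : ℂ) * z + d)^(-1 - (n : ℤ) - (r : ℤ) - 1) * c *
            deriv^[r] G (((a : ℂ) * z + b) / ((c : ℂ) * z + d))
          + ((c : ℂ) * z + d)^(-1 - (n : ℤ) - (r : ℤ)) *
            (deriv^[r+1] G (((a : ℂ) * z + b) / ((c : ℂ) * z + d)) *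
              ((c : ℂ) * z + d)^(-2 : ℤ)))) z := by
      intro r hr
      have haff : HasDerivAt (fun ζ : ℂ => (c : ℂ) * ζ + d) c z := by
        simpa using ((hasDerivAt_id z).const_mul (c : ℂ)).add_const (d : ℂ)
      have hzp : HasDerivAt (fun ζ : ℂ => ((c : ℂ) * ζ + d)^(-1 - (n : ℤ) - (r : ℤ)))
          ((((-1 - (n : ℤ) - (r : ℤ)) : ℂ)) * ((c : ℂ) * z + d)^(-1 - (n : ℤ) - (r : ℤ) - 1) * c)
          z := by
        have h0 := hasDerivAt_zpow (-1 - (n : ℤ) - (r : ℤ)) ((c : ℂ) * z + d) (Or.inl hne)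
        have := h0.comp z haff
        simpa [Function.comp_def, mul_assoc, mul_comm, mul_left_comm] using this
      have hout : HasDerivAt (deriv^[r] G)
          (deriv^[r+1] G (((a : ℂ) * z + b) / ((c : ℂ) * z + d)))
          (((a : ℂ) * z + b) / ((c : ℂ) * z + d)) := by
        have hdiff := ((analyticOnNhd_iter_deriv G hG r).differentiableOn).differentiableAt
          (isOpen_UH.mem_nhds hσz)
        have := hdiff.hasDerivAt
        rwa [show deriv (deriv^[r] G) = deriv^[r+1] G from
          (Function.iterate_succ_apply' deriv r G).symm] at this
      have hcomp : HasDerivAt (fun w => deriv^[r] G (((a : ℂ) * w + b) / ((c : ℂ) * w + d)))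
          (deriv^[r+1] G (((a : ℂ) * z + b) / ((c : ℂ) * z + d)) *
            ((c : ℂ) * z + d)^(-2 : ℤ)) z :=
        hout.comp z (hasDerivAt_moebius hdet hz)
      have := (hzp.mul hcomp).const_mul (RCA n r * (-(c : ℂ))^(n-r))
      exact this.congr_of_eventuallyEq
        (Filter.Eventually.of_forall fun w => by simp only [Pi.mul_apply]; ring)
    have hds := HasDerivAt.fun_sum hterm
    rw [hds.deriv]
    refine Eq.trans (Finset.sum_congr rfl fun r hr => ?_)
      (Eq.trans (sum_step n ((c : ℂ) * z + d) (-(c : ℂ)) hne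
        (fun r => deriv^[r] G (((a : ℂ) * z + b) / ((c : ℂ) * z + d))))
        (Finset.sum_congr rfl fun r hr => ?_))
    · push_cast
      ring
    · push_cast
      ring


lemma fact_ne (n : ℕ) : ((n.factorial : ℂ)) ≠ 0 := by
  exact_mod_cast (Nat.factorial_pos n).ne'

lemma S_gt {ℓ r s : ℕ} (h : ℓ < r + s) :
    ∑ j ∈ range (ℓ+1), (-1:ℂ)^j * (ℓ.choose j : ℂ)^2 * RCA j s * RCA (ℓ-j) r = 0 := by
  apply sum_eq_zero
  intro j hj
  have hjl : j ≤ ℓ := by have := mem_range.mp hj; omega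
  by_cases hs : j < s
  · rw [RCA_zero_of_lt hs]; ring
  · have : ℓ - j < r := by omega
    rw [RCA_zero_of_lt this]; ring

lemma S_diag {ℓ r s : ℕ} (h : r + s = ℓ) :
    ∑ j ∈ range (ℓ+1), (-1:ℂ)^j * (ℓ.choose j : ℂ)^2 * RCA j s * RCA (ℓ-j) r
      = (-1:ℂ)^s * (ℓ.choose s : ℂ)^2 := by
  rw [Finset.sum_eq_single_of_mem s (mem_range.mpr (by omega))]
  · have h1 : ℓ - s = r := by omega
    rw [h1, RCA_self, RCA_self]; ring
  · intro j hj hne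
    have hjl : j ≤ ℓ := by have := mem_range.mp hj; omega
    by_cases hs : j < s
    · rw [RCA_zero_of_lt hs]; ring
    · have : ℓ - j < r := by omega
      rw [RCA_zero_of_lt this]; ring

lemma S_lt {ℓ r s : ℕ} (h : r + s < ℓ) :
    ∑ j ∈ range (ℓ+1), (-1:ℂ)^j * (ℓ.choose j : ℂ)^2 * RCA j s * RCA (ℓ-j) r = 0 := by
  set N : ℕ := ℓ - r - s with hN
  have hN0 : 0 < N := by omega
  have hsub : Finset.Ico s (s + N + 1) ⊆ range (ℓ+1) := by
    intro j hj
    rw [Finset.mem_Ico] at hj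
    rw [mem_range]
    omega
  have hvan : ∀ j ∈ range (ℓ+1), j ∉ Finset.Ico s (s + N + 1) →
      (-1:ℂ)^j * (ℓ.choose j : ℂ)^2 * RCA j s * RCA (ℓ-j) r = 0 := by
    intro j hj hnot
    have hjl : j ≤ ℓ := by have := mem_range.mp hj; omega
    rw [Finset.mem_Ico] at hnot
    push_neg at hnot
    by_cases hs : j < s
    · rw [RCA_zero_of_lt hs]; ring
    · have : ℓ - j < r := by
        have := hnot (by omega)
        omega
      rw [RCA_zero_of_lt this]; ring
  rw [← Finset.sum_subset hsub hvan]
  rw [Finset.sum_Ico_eq_sum_range]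
  have hrange : s + N + 1 - s = N + 1 := by omega
  rw [hrange]
  set C : ℂ := (-1:ℂ)^s * (ℓ.factorial : ℂ)^2 /
    ((s.factorial : ℂ)^2 * (r.factorial : ℂ)^2 * (N.factorial : ℂ)) with hC
  have hterm : ∀ k ∈ range (N+1),
      (-1:ℂ)^(s+k) * (ℓ.choose (s+k) : ℂ)^2 * RCA (s+k) s * RCA (ℓ-(s+k)) r
        = C * ((-1:ℂ)^k * (N.choose k : ℂ)) := by
    intro k hk
    have hkN : k ≤ N := by have := mem_range.mp hk; omega
    obtain ⟨p, hp⟩ : ∃ p, N = k + p := ⟨N - k, by omega⟩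
    have hℓ : ℓ = r + s + k + p := by omega
    subst hℓ
    have e1 : r + s + k + p - (s + k) = r + p := by omega
    rw [e1]
    have e2 : s + k - s = k := by omega
    rw [RCA_eq (by omega), RCA_eq (by omega), e2]
    have e3 : r + p - r = p := by omega
    rw [e3]
    rw [Nat.cast_choose ℂ (show s + k ≤ r + s + k + p by omega)]
    rw [hC, hp]
    have e4 : r + s + k + p - (s + k) = r + p := by omega
    rw [e4]
    rw [Nat.cast_choose ℂ (show k ≤ k + p by omega)]
    have e5 : k + p - k = p := by omega
    rw [e5]
    have h1 := fact_ne s; have h2 := fact_ne r; have h3 := fact_ne k; have h4 := fact_ne p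
    have h5 := fact_ne (s+k); have h6 := fact_ne (r+p); have h7 := fact_ne (k+p)
    have h8 := fact_ne (r+s+k+p)
    simp only [← div_eq_mul_inv, inv_pow, div_pow, div_div, div_mul_eq_mul_div, ← mul_div_assoc]
    rw [div_eq_div_iff (by simp [h1, h2, h3, h4, h5, h6, h7, h8, pow_eq_zero_iff])
      (by simp [h1, h2, h3, h4, h5, h6, h7, h8, pow_eq_zero_iff])]
    ring
  rw [Finset.sum_congr rfl hterm, ← Finset.mul_sum]
  have : ∑ k ∈ range (N+1), (-1:ℂ)^k * (N.choose k : ℂ) = 0 := by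
    have hz := Int.alternating_sum_range_choose_of_ne hN0.ne'
    have : ((∑ i ∈ range (N + 1), (-1:ℤ) ^ i * ↑(N.choose i) : ℤ) : ℂ) = ((0:ℤ):ℂ) := by
      rw [hz]
    push_cast at this
    convert this using 2
  rw [this, mul_zero]


lemma RC_comb (ℓ : ℕ) (x u : ℂ) (hx : x ≠ 0) (X : ℕ → ℕ → ℂ) :
    ∑ j ∈ range (ℓ+1), ((-1:ℂ)^j * ((ℓ.choose j : ℂ))^2 *
      ∑ s ∈ range (j+1), RCA j s * u^(j-s) * x^(-1-(j:ℤ)-(s:ℤ)) *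
        (∑ r ∈ range (ℓ-j+1), RCA (ℓ-j) r * u^(ℓ-j-r) * x^(-1-((ℓ-j : ℕ):ℤ)-(r:ℤ)) * X r s))
    = x^(-(2*(ℓ:ℤ))-2) * ∑ j ∈ range (ℓ+1), (-1:ℂ)^j * ((ℓ.choose j : ℂ))^2 * X (ℓ-j) j := by
  set t : ℕ → ℕ → ℕ → ℂ := fun j s r =>
    ((-1:ℂ)^j * (ℓ.choose j : ℂ)^2 * RCA j s * RCA (ℓ-j) r) *
      (u^(ℓ-s-r) * x^(-2-(ℓ:ℤ)-(s:ℤ)-(r:ℤ)) * X r s) with htdef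
  have hstep1 : ∀ j ∈ range (ℓ+1), ((-1:ℂ)^j * ((ℓ.choose j : ℂ))^2 *
      ∑ s ∈ range (j+1), RCA j s * u^(j-s) * x^(-1-(j:ℤ)-(s:ℤ)) *
        (∑ r ∈ range (ℓ-j+1), RCA (ℓ-j) r * u^(ℓ-j-r) * x^(-1-((ℓ-j : ℕ):ℤ)-(r:ℤ)) * X r s))
      = ∑ s ∈ range (ℓ+1), ∑ r ∈ range (ℓ+1), t j s r := by
    intro j hj
    have hjl : j ≤ ℓ := by have := mem_range.mp hj; omega
    have h1 : ∀ s ∈ range (j+1),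
        (-1:ℂ)^j * ((ℓ.choose j : ℂ))^2 * (RCA j s * u^(j-s) * x^(-1-(j:ℤ)-(s:ℤ)) *
          (∑ r ∈ range (ℓ-j+1), RCA (ℓ-j) r * u^(ℓ-j-r) * x^(-1-((ℓ-j : ℕ):ℤ)-(r:ℤ)) * X r s))
        = ∑ r ∈ range (ℓ+1), t j s r := by
      intro s hs
      have hsj : s ≤ j := by have := mem_range.mp hs; omega
      have hA : (-1:ℂ)^j * ((ℓ.choose j : ℂ))^2 * (RCA j s * u^(j-s) * x^(-1-(j:ℤ)-(s:ℤ)) *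
          (∑ r ∈ range (ℓ-j+1), RCA (ℓ-j) r * u^(ℓ-j-r) * x^(-1-((ℓ-j : ℕ):ℤ)-(r:ℤ)) * X r s))
          = ∑ r ∈ range (ℓ-j+1), t j s r := by
        rw [mul_sum, mul_sum]
        apply sum_congr rfl
        intro r hr
        have hrj : r ≤ ℓ - j := by have := mem_range.mp hr; omega
        rw [htdef]
        simp only
        have hu : u^(j-s) * u^(ℓ-j-r) = u^(ℓ-s-r) := by
          rw [← pow_add]; congr 1; omega
        have hxp : x^(-1-(j:ℤ)-(s:ℤ)) * x^(-1-((ℓ-j : ℕ):ℤ)-(r:ℤ)) =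
            x^(-2-(ℓ:ℤ)-(s:ℤ)-(r:ℤ)) := by
          rw [← zpow_add₀ hx]
          congr 1
          rw [Nat.cast_sub hjl]
          ring
        rw [← hu, ← hxp]
        ring
      rw [hA]
      apply Finset.sum_subset (Finset.range_subset_range.mpr (by omega : ℓ - j + 1 ≤ ℓ + 1))
      intro r _ hr
      have : ℓ - j < r := by
        have := Finset.mem_range.not.mp hr
        omega
      rw [htdef]
      simp only [RCA_zero_of_lt this]
      ring
    rw [mul_sum, sum_congr rfl h1]
    apply Finset.sum_subset (Finset.range_subset_range.mpr (by omega : j + 1 ≤ ℓ + 1))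
    intro s _ hs
    have hjs : j < s := by
      have := Finset.mem_range.not.mp hs
      omega
    apply sum_eq_zero
    intro r _
    rw [htdef]
    simp only [RCA_zero_of_lt hjs]
    ring
  rw [sum_congr rfl hstep1]
  rw [Finset.sum_comm]
  have hswap : ∀ s ∈ range (ℓ+1), ∑ j ∈ range (ℓ+1), ∑ r ∈ range (ℓ+1), t j s r
      = ∑ r ∈ range (ℓ+1), ∑ j ∈ range (ℓ+1), t j s r := fun s _ => Finset.sum_comm
  rw [sum_congr rfl hswap]
  -- factor the j-sum
  have hfac : ∀ s ∈ range (ℓ+1), ∀ r ∈ range (ℓ+1),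
      ∑ j ∈ range (ℓ+1), t j s r
      = (∑ j ∈ range (ℓ+1), (-1:ℂ)^j * (ℓ.choose j : ℂ)^2 * RCA j s * RCA (ℓ-j) r) *
          (u^(ℓ-s-r) * x^(-2-(ℓ:ℤ)-(s:ℤ)-(r:ℤ)) * X r s) := by
    intro s _ r _
    rw [sum_mul]
  -- collapse the r-sum to the single diagonal term
  have hdiag : ∀ s ∈ range (ℓ+1), ∑ r ∈ range (ℓ+1), ∑ j ∈ range (ℓ+1), t j s r
      = (-1:ℂ)^s * (ℓ.choose s : ℂ)^2 * (x^(-(2*(ℓ:ℤ))-2) * X (ℓ-s) s) := by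
    intro s hs
    have hsl : s ≤ ℓ := by have := mem_range.mp hs; omega
    rw [sum_congr rfl (hfac s hs)]
    rw [Finset.sum_eq_single_of_mem (ℓ-s) (mem_range.mpr (by omega))]
    · rw [S_diag (by omega : (ℓ - s) + s = ℓ)]
      have h0 : ℓ - s - (ℓ - s) = 0 := by omega
      rw [h0, pow_zero]
      have hxe : (-2-(ℓ:ℤ)-(s:ℤ)-((ℓ-s : ℕ):ℤ)) = (-(2*(ℓ:ℤ))-2) := by
        rw [Nat.cast_sub hsl]; ring
      rw [hxe]
      ring
    · intro r hr hne
      have hrl : r ≤ ℓ := by have := mem_range.mp hr; omega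
      rcases lt_trichotomy (r + s) ℓ with h | h | h
      · rw [S_lt h]; ring
      · exact absurd (by omega : r = ℓ - s) hne
      · rw [S_gt h]; ring
  rw [sum_congr rfl hdiag, mul_sum]
  apply sum_congr rfl
  intro s _
  ring



lemma iter_deriv_eventuallyEq {f g : ℂ → ℂ} {z : ℂ} (h : f =ᶠ[nhds z] g) (m : ℕ) :
    deriv^[m] f =ᶠ[nhds z] deriv^[m] g := by
  induction m with
  | zero => exact h
  | succ m ih =>
    rw [Function.iterate_succ_apply' deriv m f, Function.iterate_succ_apply' deriv m g]
    exact ih.deriv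

lemma analyticOnNhd_iter {g : ℂ → ℂ} (hg : AnalyticOnNhd ℂ g UH) (m : ℕ) :
    AnalyticOnNhd ℂ (deriv^[m] g) UH := by
  induction m with
  | zero => exact hg
  | succ m ih =>
    rw [Function.iterate_succ_apply' deriv m g]
    exact ih.deriv

lemma iter_deriv_sum {ι : Type*} (t : Finset ι) (h : ι → ℂ → ℂ)
    (hh : ∀ i ∈ t, AnalyticOnNhd ℂ (h i) UH) (m : ℕ) :
    ∀ {z : ℂ}, 0 < z.im →
      deriv^[m] (fun w => ∑ i ∈ t, h i w) z = ∑ i ∈ t, deriv^[m] (h i) z := by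
  induction m with
  | zero => intro z _; simp
  | succ m ih =>
    intro z hz
    rw [Function.iterate_succ_apply']
    have hev : deriv^[m] (fun w => ∑ i ∈ t, h i w) =ᶠ[nhds z]
        (fun w => ∑ i ∈ t, deriv^[m] (h i) w) := by
      filter_upwards [isOpen_UH.mem_nhds hz] with w hw
      exact ih hw
    rw [hev.deriv_eq, deriv_fun_sum (fun i hi =>
      (((analyticOnNhd_iter (hh i hi) m).differentiableOn).differentiableAt
        (isOpen_UH.mem_nhds hz)))]
    apply Finset.sum_congr rfl
    intro i _
    rw [← Function.iterate_succ_apply' deriv m (h i)]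

/-- Step A : expansion of the iterated second-variable partial of the slashed function. -/
lemma pd2_iter_fg {a b c d : ℝ} (hdet : a * d - b * c = 1) (f : ℂ × ℂ → ℂ)
    (hf : DifferentiableOn ℂ f (UH ×ˢ UH)) (j : ℕ) {z1 z2 : ℂ}
    (hz1 : 0 < z1.im) (hz2 : 0 < z2.im) :
    (pd2^[j] (fun p : ℂ × ℂ => ((c : ℂ) * p.1 + d)⁻¹ * ((c : ℂ) * p.2 + d)⁻¹ *
        f (((a : ℂ) * p.1 + b) / ((c : ℂ) * p.1 + d),
           ((a : ℂ) * p.2 + b) / ((c : ℂ) * p.2 + d)))) (z1, z2)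
    = ∑ s ∈ range (j+1), RCA j s * (-(c : ℂ))^(j-s) *
        ((c : ℂ) * z2 + d)^(-1 - (j : ℤ) - (s : ℤ)) *
        (((c : ℂ) * z1 + d)⁻¹ *
          (pd2^[s] f) (((a : ℂ) * z1 + b) / ((c : ℂ) * z1 + d),
            ((a : ℂ) * z2 + b) / ((c : ℂ) * z2 + d))) := by
  rw [pd2_iter]
  have heq : (fun u => ((c : ℂ) * z1 + d)⁻¹ * ((c : ℂ) * u + d)⁻¹ *
      f (((a : ℂ) * z1 + b) / ((c : ℂ) * z1 + d), ((a : ℂ) * u + b) / ((c : ℂ) * u + d)))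
      = fun u => ((c : ℂ) * z1 + d)⁻¹ * (((c : ℂ) * u + d)⁻¹ *
      f (((a : ℂ) * z1 + b) / ((c : ℂ) * z1 + d), ((a : ℂ) * u + b) / ((c : ℂ) * u + d))) := by
    funext u; ring
  rw [heq, iter_deriv_const_mul]
  beta_reduce
  have hG : DifferentiableOn ℂ
      (fun v => f (((a : ℂ) * z1 + b) / ((c : ℂ) * z1 + d), v)) UH := by
    apply hf.comp ((differentiableOn_const _).prodMk differentiableOn_id)
    intro v hv
    exact Set.mk_mem_prod (im_moebius hdet hz1) hv
  have htr : deriv^[j] (fun u => ((c : ℂ) * u + d)⁻¹ *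
      f (((a : ℂ) * z1 + b) / ((c : ℂ) * z1 + d), ((a : ℂ) * u + b) / ((c : ℂ) * u + d))) z2
      = ∑ s ∈ range (j+1), RCA j s * (-(c : ℂ))^(j-s) *
          ((c : ℂ) * z2 + d)^(-1 - (j : ℤ) - (s : ℤ)) *
          deriv^[s] (fun v => f (((a : ℂ) * z1 + b) / ((c : ℂ) * z1 + d), v))
            (((a : ℂ) * z2 + b) / ((c : ℂ) * z2 + d)) :=
    transform_deriv_iter hdet _ hG j hz2
  rw [htr, Finset.mul_sum]
  apply Finset.sum_congr rfl
  intro s _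
  rw [show deriv^[s] (fun v => f (((a : ℂ) * z1 + b) / ((c : ℂ) * z1 + d), v))
      (((a : ℂ) * z2 + b) / ((c : ℂ) * z2 + d))
      = (pd2^[s] f) (((a : ℂ) * z1 + b) / ((c : ℂ) * z1 + d),
          ((a : ℂ) * z2 + b) / ((c : ℂ) * z2 + d)) from (pd2_iter f s _ _).symm]
  ring

/-- covariance of the Rankin–Cohen brackets. For
`g = [[a,b],[c,d]] ∈ SL(2,ℝ)`, `f` holomorphic on `Π × Π`, and
`f^g(ζ₁,ζ₂) = (cζ₁+d)⁻¹(cζ₂+d)⁻¹ f((aζ₁+b)/(cζ₁+d), (aζ₂+b)/(cζ₂+d))`, one has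
`(R_ℓ (f^g))(z) = (cz+d)^{−2ℓ−2} (R_ℓ f)((az+b)/(cz+d))` for every `z ∈ Π`. -/
theorem statement19 (ℓ : ℕ) (f : ℂ × ℂ → ℂ)
    (hf : DifferentiableOn ℂ f ({ζ : ℂ | 0 < ζ.im} ×ˢ {ζ : ℂ | 0 < ζ.im}))
    (a b c d : ℝ) (hdet : a * d - b * c = 1) (z : ℂ) (hz : 0 < z.im) :
    RCb ℓ (fun p =>
        ((c : ℂ) * p.1 + (d : ℂ))⁻¹ * ((c : ℂ) * p.2 + (d : ℂ))⁻¹ *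
          f (((a : ℂ) * p.1 + (b : ℂ)) / ((c : ℂ) * p.1 + (d : ℂ)),
             ((a : ℂ) * p.2 + (b : ℂ)) / ((c : ℂ) * p.2 + (d : ℂ)))) z
      = ((c : ℂ) * z + (d : ℂ)) ^ (-(2 * ℓ : ℤ) - 2) *
          RCb ℓ f (((a : ℂ) * z + (b : ℂ)) / ((c : ℂ) * z + (d : ℂ))) := by
  have hfUH : DifferentiableOn ℂ f (UH ×ˢ UH) := hf
  have hne : (c : ℂ) * z + d ≠ 0 := den_ne hdet hz
  have hσz : 0 < (((a : ℂ) * z + b) / ((c : ℂ) * z + d)).im := im_moebius hdet hz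
  have hmoe : DifferentiableOn ℂ (fun ζ => ((a : ℂ) * ζ + b) / ((c : ℂ) * ζ + d)) UH :=
    fun ζ hζ => ((hasDerivAt_moebius hdet hζ).differentiableAt).differentiableWithinAt
  have hden : DifferentiableOn ℂ (fun ζ => ((c : ℂ) * ζ + d)⁻¹) UH := by
    intro ζ hζ
    apply DifferentiableAt.differentiableWithinAt
    exact (((differentiable_id.const_mul _).add_const _) ζ).inv (den_ne hdet hζ)
  -- the per-`j` computation
  have hTj : ∀ j ∈ range (ℓ+1),
      (pd1^[ℓ - j] (pd2^[j] (fun p : ℂ × ℂ =>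
        ((c : ℂ) * p.1 + d)⁻¹ * ((c : ℂ) * p.2 + d)⁻¹ *
          f (((a : ℂ) * p.1 + b) / ((c : ℂ) * p.1 + d),
             ((a : ℂ) * p.2 + b) / ((c : ℂ) * p.2 + d))))) (z, z)
      = ∑ s ∈ range (j+1), RCA j s * (-(c : ℂ))^(j-s) *
          ((c : ℂ) * z + d)^(-1 - (j : ℤ) - (s : ℤ)) *
          (∑ r ∈ range (ℓ-j+1), RCA (ℓ-j) r * (-(c : ℂ))^(ℓ-j-r) *
            ((c : ℂ) * z + d)^(-1 - ((ℓ-j : ℕ) : ℤ) - (r : ℤ)) *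
            (pd1^[r] (pd2^[s] f)) (((a : ℂ) * z + b) / ((c : ℂ) * z + d),
              ((a : ℂ) * z + b) / ((c : ℂ) * z + d))) := by
    intro j hj
    rw [pd1_iter]
    have hev : (fun w1 => (pd2^[j] (fun p : ℂ × ℂ =>
        ((c : ℂ) * p.1 + d)⁻¹ * ((c : ℂ) * p.2 + d)⁻¹ *
          f (((a : ℂ) * p.1 + b) / ((c : ℂ) * p.1 + d),
             ((a : ℂ) * p.2 + b) / ((c : ℂ) * p.2 + d)))) (w1, z)) =ᶠ[nhds z]
        (fun w1 => ∑ s ∈ range (j+1), RCA j s * (-(c : ℂ))^(j-s) *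
          ((c : ℂ) * z + d)^(-1 - (j : ℤ) - (s : ℤ)) *
          (((c : ℂ) * w1 + d)⁻¹ *
            (pd2^[s] f) (((a : ℂ) * w1 + b) / ((c : ℂ) * w1 + d),
              ((a : ℂ) * z + b) / ((c : ℂ) * z + d)))) := by
      filter_upwards [isOpen_UH.mem_nhds hz] with w1 hw1
      exact pd2_iter_fg hdet f hfUH j hw1 hz
    rw [(iter_deriv_eventuallyEq hev (ℓ-j)).eq_of_nhds]
    -- family of analytic functions
    have hfam : ∀ s ∈ range (j+1), AnalyticOnNhd ℂ
        (fun w1 => RCA j s * (-(c : ℂ))^(j-s) *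
          ((c : ℂ) * z + d)^(-1 - (j : ℤ) - (s : ℤ)) *
          (((c : ℂ) * w1 + d)⁻¹ *
            (pd2^[s] f) (((a : ℂ) * w1 + b) / ((c : ℂ) * w1 + d),
              ((a : ℂ) * z + b) / ((c : ℂ) * z + d)))) UH := by
      intro s _
      apply DifferentiableOn.analyticOnNhd _ isOpen_UH
      apply DifferentiableOn.const_mul
      apply hden.mul
      exact (pd2_iter_slice_diff f hfUH s hσz).comp hmoe (fun ζ hζ => im_moebius hdet hζ)
    rw [iter_deriv_sum (range (j+1)) _ hfam (ℓ-j) hz]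
    apply Finset.sum_congr rfl
    intro s _
    have hcm := congrFun (iter_deriv_const_mul
      (RCA j s * (-(c : ℂ))^(j-s) * ((c : ℂ) * z + d)^(-1 - (j : ℤ) - (s : ℤ)))
      (fun w1 => ((c : ℂ) * w1 + d)⁻¹ *
        (pd2^[s] f) (((a : ℂ) * w1 + b) / ((c : ℂ) * w1 + d),
          ((a : ℂ) * z + b) / ((c : ℂ) * z + d))) (ℓ-j)) z
    rw [hcm]
    have hH : DifferentiableOn ℂ
        (fun y => (pd2^[s] f) (y, ((a : ℂ) * z + b) / ((c : ℂ) * z + d))) UH :=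
      pd2_iter_slice_diff f hfUH s hσz
    have htr : deriv^[ℓ-j] (fun w1 => ((c : ℂ) * w1 + d)⁻¹ *
        (pd2^[s] f) (((a : ℂ) * w1 + b) / ((c : ℂ) * w1 + d),
          ((a : ℂ) * z + b) / ((c : ℂ) * z + d))) z
        = ∑ r ∈ range (ℓ-j+1), RCA (ℓ-j) r * (-(c : ℂ))^(ℓ-j-r) *
            ((c : ℂ) * z + d)^(-1 - ((ℓ-j : ℕ) : ℤ) - (r : ℤ)) *
            deriv^[r] (fun y => (pd2^[s] f) (y, ((a : ℂ) * z + b) / ((c : ℂ) * z + d)))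
              (((a : ℂ) * z + b) / ((c : ℂ) * z + d)) :=
      transform_deriv_iter hdet _ hH (ℓ-j) hz
    rw [htr]
    congr 1
    apply Finset.sum_congr rfl
    intro r _
    rw [show deriv^[r] (fun y => (pd2^[s] f) (y, ((a : ℂ) * z + b) / ((c : ℂ) * z + d)))
        (((a : ℂ) * z + b) / ((c : ℂ) * z + d))
        = (pd1^[r] (pd2^[s] f)) (((a : ℂ) * z + b) / ((c : ℂ) * z + d),
            ((a : ℂ) * z + b) / ((c : ℂ) * z + d)) from (pd1_iter _ r _ _).symm]
  show (∑ j ∈ range (ℓ+1), (-1 : ℂ) ^ j * (ℓ.choose j : ℂ) ^ 2 * _) = _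
  rw [Finset.sum_congr rfl (fun j hj => by rw [hTj j hj])]
  have hcomb := RC_comb ℓ ((c : ℂ) * z + d) (-(c : ℂ)) hne
    (fun r s => (pd1^[r] (pd2^[s] f)) (((a : ℂ) * z + b) / ((c : ℂ) * z + d),
      ((a : ℂ) * z + b) / ((c : ℂ) * z + d)))
  rw [show (-(2 * ℓ : ℤ) - 2) = (-(2 * (ℓ : ℤ)) - 2) by ring]
  exact hcomb
end
end
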